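/- arXiv:2501.04360 — 4 statements merged into one kernel-verified Lean document; each statement's English description precedes it below -/
import Mathlib

section
/- Let (x^(i), y_i), i = 1,…,n, be given with x^(i) ∈ [0,1]^d and y_i ∈ ℝ, and let 1 ≤ s ≤ d. Every minimizer f̂ of Σ_{i=1}^n (y_i − f(x^(i)))² over f ∈ F^{d,s}_TC is also a minimizer of Σ_{i=1}^n (y_i − f(x^(i)))² over the class of all f ∈ F^d_TCP satisfying the interaction restriction condition of order s. In particular, every minimizer over F^{d,d}_TC also minimizes the least squares criterion over the entire class F^d_TCP. -/
open MeasureTheory ProbabilityTheory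

noncomputable section

/-- The unit cube `[0,1]^ι` inside `ι → ℝ`. -/
def unitCube (ι : Type*) : Set (ι → ℝ) := Set.univ.pi fun _ => Set.Icc (0 : ℝ) 1

/-- The (tensor-product) divided difference of `f` of order `p` at the points `x`. -/
def mvDivDiff {ι : Type*} [Fintype ι] [DecidableEq ι] (f : (ι → ℝ) → ℝ) (p : ι → ℕ)
    (x : (k : ι) → Fin (p k + 1) → ℝ) : ℝ :=
  ∑ i : (k : ι) → Fin (p k + 1),
    f (fun k => x k (i k)) /
      ∏ k, ∏ j ∈ Finset.univ.erase (i k), (x k (i k) - x k j)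

/-- `F^d_TCP`: total concavity in the sense of Popoviciu, i.e. all divided differences
of order `p ∈ {0,1,2}^d` with `max_k p_k = 2` are nonpositive. -/
def MemTCP (d : ℕ) (f : (Fin d → ℝ) → ℝ) : Prop :=
  ∀ p : Fin d → ℕ, (∀ k, p k ≤ 2) → (∃ k, p k = 2) →
    ∀ x : (k : Fin d) → Fin (p k + 1) → ℝ,
      (∀ k, StrictMono (x k)) → (∀ k j, x k j ∈ Set.Icc (0 : ℝ) 1) →
      mvDivDiff f p x ≤ 0

/-- The collection of subsets `S ⊆ [d]` with `1 ≤ |S| ≤ s`. -/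
def smallSets (d s : ℕ) : Finset (Finset (Fin d)) :=
  Finset.univ.filter fun S => 1 ≤ S.card ∧ S.card ≤ s

/-- The set `[0,1)^{|S|} \ {0}`, viewed inside `Fin d → ℝ` (coordinates in `S`). -/
def tcSupport (d : ℕ) (S : Finset (Fin d)) : Set (Fin d → ℝ) :=
  {t | (∀ j ∈ S, t j ∈ Set.Ico (0 : ℝ) 1) ∧ ∃ j ∈ S, t j ≠ 0}

/-- A representation `(β₀, (β_S), (ν_S))` of a totally concave function:
a constant, coefficients for the multilinear terms, and finite Borel measures
`ν_S` on `[0,1)^{|S|} \ {0}`. -/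
structure TCRep (d : ℕ) where
  β0 : ℝ
  β : Finset (Fin d) → ℝ
  ν : Finset (Fin d) → Measure (Fin d → ℝ)
  finite : ∀ S, IsFiniteMeasure (ν S)
  support : ∀ S, ν S (tcSupport d S)ᶜ = 0

/-- The function represented by `r`, keeping interactions of order at most `s`. -/
def TCRep.toFun {d : ℕ} (s : ℕ) (r : TCRep d) (x : Fin d → ℝ) : ℝ :=
  r.β0 + ∑ S ∈ smallSets d s, r.β S * ∏ j ∈ S, x j
    - ∑ S ∈ smallSets d s, ∫ t, (∏ j ∈ S, max (x j - t j) 0) ∂(r.ν S)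

/-- The total size `V` of the measures in the representation `r`. -/
def TCRep.V {d : ℕ} (s : ℕ) (r : TCRep d) : ℝ :=
  ∑ S ∈ smallSets d s, (r.ν S Set.univ).toReal

/-- Membership in the class `F^{d,s}_TC` of totally concave functions on `[0,1]^d`
with interactions of order at most `s`. -/
def MemTC (d s : ℕ) (f : (Fin d → ℝ) → ℝ) : Prop :=
  ∃ r : TCRep d, ∀ x ∈ unitCube (Fin d), f x = r.toFun s x

/-- Membership in `F^{d,s}_TC` via a representation of total measure size at most `Vbd`. -/
def MemTCV (d s : ℕ) (Vbd : ℝ) (f : (Fin d → ℝ) → ℝ) : Prop :=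
  ∃ r : TCRep d, (∀ x ∈ unitCube (Fin d), f x = r.toFun s x) ∧ r.V s ≤ Vbd

/-- The interaction restriction condition of order `s`. -/
def InteractionRestriction (d s : ℕ) (f : (Fin d → ℝ) → ℝ) : Prop :=
  ∀ S : Finset (Fin d), s < S.card →
    ∀ x y : Fin d → ℝ, (∀ k ∈ S, 0 ≤ x k ∧ x k < y k ∧ y k ≤ 1) →
      ∑ R ∈ S.powerset, (-1 : ℝ) ^ (S.card - R.card) *
        f (fun k => if k ∈ R then y k else if k ∈ S then x k else 0) = 0

/-- The regularity condition at `0` for the subset `S`: the relevant divided differences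
near the origin are bounded above. -/
def RegZero (d : ℕ) (f : (Fin d → ℝ) → ℝ) (S : Finset (Fin d)) : Prop :=
  ∃ M : ℝ, ∀ t : Fin d → ℝ, (∀ k ∈ S, t k ∈ Set.Ioc (0 : ℝ) 1) →
    (∏ k ∈ S, t k)⁻¹ *
      ∑ R ∈ S.powerset, (-1 : ℝ) ^ (S.card - R.card) *
        f (fun k => if k ∈ R then t k else 0) ≤ M

/-- The regularity condition at `1` for the subset `S`: the relevant divided differences
near the far corner are bounded below. -/
def RegOne (d : ℕ) (f : (Fin d → ℝ) → ℝ) (S : Finset (Fin d)) : Prop :=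
  ∃ M : ℝ, ∀ t : Fin d → ℝ, (∀ k ∈ S, t k ∈ Set.Ico (0 : ℝ) 1) →
    M ≤ (∏ k ∈ S, (1 - t k))⁻¹ *
      ∑ R ∈ S.powerset, (-1 : ℝ) ^ (S.card - R.card) *
        f (fun k => if k ∈ R then 1 else if k ∈ S then t k else 0)

/-- Entire monotonicity: all divided differences of order `p ∈ {0,1}^ι \ {0}`
are nonnegative. -/
def EntirelyMonotone {ι : Type*} [Fintype ι] [DecidableEq ι] (g : (ι → ℝ) → ℝ) : Prop :=
  ∀ p : ι → ℕ, (∀ k, p k ≤ 1) → (∃ k, p k = 1) →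
    ∀ x : (k : ι) → Fin (p k + 1) → ℝ,
      (∀ k, StrictMono (x k)) → (∀ k j, x k j ∈ Set.Icc (0 : ℝ) 1) →
      0 ≤ mvDivDiff g p x

/-- Coordinate-wise right-continuity on the unit cube. -/
def CwRightCont {ι : Type*} [DecidableEq ι] (g : (ι → ℝ) → ℝ) : Prop :=
  ∀ x : ι → ℝ, (∀ k, x k ∈ Set.Icc (0 : ℝ) 1) → ∀ k : ι,
    ContinuousWithinAt (fun u => g (Function.update x k u)) (Set.Icc (x k) 1) (x k)

/-- Coordinate-wise left-continuity at points of the cube whose `k`-th coordinate is `1`,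
with respect to that coordinate. -/
def CwLeftContAtOne {ι : Type*} [DecidableEq ι] (g : (ι → ℝ) → ℝ) : Prop :=
  ∀ x : ι → ℝ, (∀ k, x k ∈ Set.Icc (0 : ℝ) 1) → ∀ k : ι, x k = 1 →
    ContinuousWithinAt (fun u => g (Function.update x k u)) (Set.Icc (0 : ℝ) 1) (x k)

/-- `t` belongs to the lattice `L_S` generated by the design points `x`
(extended by `0` in the coordinates outside `S`). -/
def InLattice {d n : ℕ} (x : Fin n → Fin d → ℝ) (S : Finset (Fin d)) (t : Fin d → ℝ) : Prop :=
  (∀ j ∈ S, t j = 0 ∨ ∃ i, t j = x i j) ∧ (∃ j ∈ S, t j ≠ 0) ∧ ∀ j ∉ S, t j = 0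

/-- The finite-dimensional class of functions built from hinge functions with knots in the
lattices `L_S` (nonnegative coefficients on the hinge terms). -/
def MemDiscrete (d s : ℕ) {n : ℕ} (x : Fin n → Fin d → ℝ) (f : (Fin d → ℝ) → ℝ) : Prop :=
  ∃ (β0 : ℝ) (β : Finset (Fin d) → ℝ)
    (T : Finset (Fin d) → Finset (Fin d → ℝ)) (c : Finset (Fin d) → (Fin d → ℝ) → ℝ),
    (∀ S ∈ smallSets d s, ∀ t ∈ T S, InLattice x S t) ∧
    (∀ S ∈ smallSets d s, ∀ t ∈ T S, 0 ≤ c S t) ∧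
    ∀ z ∈ unitCube (Fin d),
      f z = β0 + ∑ S ∈ smallSets d s, β S * ∏ j ∈ S, z j
        - ∑ S ∈ smallSets d s, ∑ t ∈ T S, c S t * ∏ j ∈ S, max (z j - t j) 0

/-- The point of the equally spaced lattice design indexed by `i`. -/
def latticePoint {d : ℕ} (nk : Fin d → ℕ) (i : ∀ k, Fin (nk k)) : Fin d → ℝ :=
  fun k => (i k : ℝ) / (nk k)

/-- `V_design(f)`: the infimum of `V(g)` over all totally concave `g` agreeing with `f`
at the design points. -/
def Vdesign (d : ℕ) {ι : Type*} (pts : ι → Fin d → ℝ) (f : (Fin d → ℝ) → ℝ) : ℝ :=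
  sInf {v : ℝ | ∃ r : TCRep d, (∀ i, r.toFun d (pts i) = f (pts i)) ∧ v = r.V d}

/-- `f` is a continuous rectangular piecewise multi-affine function (interaction order `≤ s`)
with respect to an axis-aligned grid partition of `[0,1]^d` into `m` rectangles. -/
def IsRectPartition (d s : ℕ) (f : (Fin d → ℝ) → ℝ) (m : ℕ) : Prop :=
  ContinuousOn f (unitCube (Fin d)) ∧
  ∃ (mk : Fin d → ℕ) (u : (k : Fin d) → Fin (mk k + 1) → ℝ),
    (∀ k, StrictMono (u k)) ∧ (∀ k, u k 0 = 0) ∧ (∀ k, u k (Fin.last (mk k)) = 1) ∧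
    m = ∏ k, mk k ∧
    ∀ j : (k : Fin d) → Fin (mk k),
      ∃ (c0 : ℝ) (c : Finset (Fin d) → ℝ),
        ∀ x : Fin d → ℝ,
          (∀ k, x k ∈ Set.Icc (u k (j k).castSucc) (u k (j k).succ)) →
          f x = c0 + ∑ S ∈ smallSets d s, c S * ∏ k ∈ S, x k

/-!
A function of `F^{d,s}_TC` is totally concave and satisfies the interaction restriction: a
divided difference of a product `∏_k G_k(z_k)` is the product of the one-dimensional divided
differences of the `G_k`; these vanish at order two when `G_k` is affine and are nonnegative
when `G_k` is a hinge `(z - t)_+`, and each term of the representation depends on at most `s`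
coordinates.

Conversely, let `g ∈ F^d_TCP` satisfy the interaction restriction. On a tensor grid containing
`0`, `1` and all coordinates of the design points, `g` coincides at the nodes with its
tensor-product interpolant in the hinge bases `1, (z - t_0)_+, (z - t_1)_+, …`. The
coefficient of a basis function is a positive multiple of a divided difference of `g`, hence
nonpositive as soon as one of its orders is two; when the basis function involves more than
`s` coordinates, the coefficient is a combination of mixed differences of `g` over those
coordinates, hence zero. So the interpolant belongs to `F^{d,s}_TC`, with finitely many atoms
as measures, and agrees with `g` at the design points; a least squares minimizer over
`F^{d,s}_TC` therefore does at least as well as `g`.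
-/

open Finset

section DividedDifference

def divDiff (g : ℝ → ℝ) (p : ℕ) (xs : Fin (p + 1) → ℝ) : ℝ :=
  ∑ i, g (xs i) / ∏ j ∈ univ.erase i, (xs i - xs j)

theorem divDiff_zero (g : ℝ → ℝ) (xs : Fin 1 → ℝ) : divDiff g 0 xs = g (xs 0) := by
  simp [divDiff, Finset.eq_empty_of_forall_notMem]

theorem divDiff_one (g : ℝ → ℝ) (xs : Fin 2 → ℝ) :
    divDiff g 1 xs = (g (xs 1) - g (xs 0)) / (xs 1 - xs 0) := by
  rw [divDiff, Fin.sum_univ_two, show univ.erase (0 : Fin 2) = {1} by decide,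
    show univ.erase (1 : Fin 2) = {0} by decide, prod_singleton, prod_singleton,
    ← neg_sub (xs 1), div_neg, sub_div]
  ring

theorem divDiff_two (g : ℝ → ℝ) {xs : Fin 3 → ℝ} (hxs : StrictMono xs) :
    divDiff g 2 xs = ((g (xs 2) - g (xs 1)) / (xs 2 - xs 1)
      - (g (xs 1) - g (xs 0)) / (xs 1 - xs 0)) / (xs 2 - xs 0) := by
  have h01 : xs 0 < xs 1 := hxs (by decide)
  have h12 : xs 1 < xs 2 := hxs (by decide)
  rw [divDiff, Fin.sum_univ_three, show univ.erase (0 : Fin 3) = {1, 2} by decide,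
    show univ.erase (1 : Fin 3) = {0, 2} by decide, show univ.erase (2 : Fin 3) = {0, 1} by decide,
    prod_pair (by decide), prod_pair (by decide), prod_pair (by decide)]
  have : xs 1 - xs 0 ≠ 0 := by linarith
  have : xs 2 - xs 1 ≠ 0 := by linarith
  have : xs 2 - xs 0 ≠ 0 := by linarith
  have : xs 0 - xs 1 ≠ 0 := by linarith
  have : xs 1 - xs 2 ≠ 0 := by linarith
  have : xs 0 - xs 2 ≠ 0 := by linarith
  field_simp
  ring

theorem divDiff_nonneg {g : ℝ → ℝ} (hg₀ : ∀ z, 0 ≤ g z) (hg₁ : Monotone g)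
    (hg₂ : ConvexOn ℝ Set.univ g) {p : ℕ} (hp : p ≤ 2) {xs : Fin (p + 1) → ℝ}
    (hxs : StrictMono xs) : 0 ≤ divDiff g p xs := by
  interval_cases p
  · rw [divDiff_zero]; exact hg₀ _
  · have h01 : xs 0 < xs 1 := hxs (by decide)
    rw [divDiff_one]
    exact div_nonneg (sub_nonneg.2 (hg₁ h01.le)) (sub_nonneg.2 h01.le)
  · have h01 : xs 0 < xs 1 := hxs (by decide)
    have h12 : xs 1 < xs 2 := hxs (by decide)
    rw [divDiff_two g hxs]
    exact div_nonneg (sub_nonneg.2 <|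
      hg₂.slope_mono_adjacent (Set.mem_univ _) (Set.mem_univ _) h01 h12) (by linarith)

theorem convexOn_hinge (c : ℝ) : ConvexOn ℝ Set.univ fun z : ℝ => max (z - c) 0 :=
  ((convexOn_id convex_univ).sub (concaveOn_const c convex_univ)).sup
    (convexOn_const 0 convex_univ)

variable {ι : Type*} [Fintype ι] [DecidableEq ι]

theorem mvDivDiff_prod (G : ι → ℝ → ℝ) (p : ι → ℕ) (x : (k : ι) → Fin (p k + 1) → ℝ) :
    mvDivDiff (fun z => ∏ k, G k (z k)) p x = ∏ k, divDiff (G k) (p k) (x k) := by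
  unfold mvDivDiff divDiff
  rw [prod_univ_sum, Fintype.piFinset_univ]
  exact sum_congr rfl fun i _ => by rw [← prod_div_distrib]

theorem mvDivDiff_prod_finset (S : Finset ι) (G : ι → ℝ → ℝ) (p : ι → ℕ)
    (x : (k : ι) → Fin (p k + 1) → ℝ) :
    mvDivDiff (fun z => ∏ k ∈ S, G k (z k)) p x
      = ∏ k, divDiff (if k ∈ S then G k else fun _ => 1) (p k) (x k) := by
  rw [← mvDivDiff_prod]
  congr 1
  funext z
  refine (prod_congr rfl fun k hk => ?_).trans (prod_subset (subset_univ S) fun k _ hk => ?_) <;>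
    simp [*]

theorem mvDivDiff_congr {f g : (ι → ℝ) → ℝ} {p : ι → ℕ} {x : (k : ι) → Fin (p k + 1) → ℝ}
    (h : ∀ i : (k : ι) → Fin (p k + 1), f (fun k => x k (i k)) = g (fun k => x k (i k))) :
    mvDivDiff f p x = mvDivDiff g p x :=
  sum_congr rfl fun i _ => by rw [h i]

theorem mvDivDiff_add (f g : (ι → ℝ) → ℝ) (p : ι → ℕ) (x : (k : ι) → Fin (p k + 1) → ℝ) :
    mvDivDiff (fun z => f z + g z) p x = mvDivDiff f p x + mvDivDiff g p x := by
  simp only [mvDivDiff, add_div, sum_add_distrib]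

theorem mvDivDiff_sub (f g : (ι → ℝ) → ℝ) (p : ι → ℕ) (x : (k : ι) → Fin (p k + 1) → ℝ) :
    mvDivDiff (fun z => f z - g z) p x = mvDivDiff f p x - mvDivDiff g p x := by
  simp only [mvDivDiff, sub_div, sum_sub_distrib]

theorem mvDivDiff_const_mul (c : ℝ) (f : (ι → ℝ) → ℝ) (p : ι → ℕ)
    (x : (k : ι) → Fin (p k + 1) → ℝ) :
    mvDivDiff (fun z => c * f z) p x = c * mvDivDiff f p x := by
  simp only [mvDivDiff, mul_sum, mul_div_assoc]

theorem mvDivDiff_sum {α : Type*} (A : Finset α) (F : α → (ι → ℝ) → ℝ) (p : ι → ℕ)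
    (x : (k : ι) → Fin (p k + 1) → ℝ) :
    mvDivDiff (fun z => ∑ a ∈ A, F a z) p x = ∑ a ∈ A, mvDivDiff (F a) p x := by
  simp only [mvDivDiff, sum_div]
  exact sum_comm

theorem mvDivDiff_integral (F : (ι → ℝ) → (ι → ℝ) → ℝ) (p : ι → ℕ)
    (x : (k : ι) → Fin (p k + 1) → ℝ) (μ : Measure (ι → ℝ))
    (hF : ∀ i : (k : ι) → Fin (p k + 1), Integrable (fun t => F t fun k => x k (i k)) μ) :
    mvDivDiff (fun z => ∫ t, F t z ∂μ) p x = ∫ t, mvDivDiff (F t) p x ∂μ := by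
  simp only [mvDivDiff, ← integral_div]
  exact (integral_finsetSum _ fun i _ => (hF i).div_const _).symm

end DividedDifference

section MixedDifference

variable {ι β : Type*} [DecidableEq ι] [Zero β]

def corner (S R : Finset ι) (x y : ι → β) : ι → β :=
  fun k => if k ∈ R then y k else if k ∈ S then x k else 0

def mixedDiff (f : (ι → β) → ℝ) (S : Finset ι) (x y : ι → β) : ℝ :=
  ∑ R ∈ S.powerset, (-1) ^ (#S - #R) * f (corner S R x y)

theorem sum_powerset_neg_one_pow_mul_eq_zero {R : Type*} [CommRing R] {S : Finset ι} {a : ι}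
    (ha : a ∈ S) (F : Finset ι → R) (hF : ∀ T ⊆ S.erase a, F (insert a T) = F T) :
    ∑ T ∈ S.powerset, (-1) ^ (#S - #T) * F T = 0 := by
  rw [← insert_erase ha, sum_powerset_insert (notMem_erase a S), ← sum_add_distrib]
  refine sum_eq_zero fun T hT => ?_
  have hTS : T ⊆ S.erase a := mem_powerset.1 hT
  have hlt : #T < #S := (card_le_card hTS).trans_lt (card_erase_lt_of_mem ha)
  rw [card_insert_of_notMem (notMem_erase a S), card_erase_of_mem ha,
    card_insert_of_notMem fun h => notMem_erase a S (hTS h), hF T hTS,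
    show #S - 1 + 1 - #T = #S - 1 - #T + 1 by omega, show #S - 1 + 1 - (#T + 1) = #S - 1 - #T by
      omega, pow_succ]
  ring

theorem mixedDiff_eq_zero_of_forall_corner {f : (ι → β) → ℝ} {S : Finset ι} {x y : ι → β}
    {a : ι} (ha : a ∈ S)
    (h : ∀ R ⊆ S.erase a, f (corner S (insert a R) x y) = f (corner S R x y)) :
    mixedDiff f S x y = 0 :=
  sum_powerset_neg_one_pow_mul_eq_zero ha _ h

theorem mixedDiff_eq_zero_of_dependsOn {f : (ι → β) → ℝ} {S T : Finset ι} {a : ι}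
    (hf : DependsOn f T) (haS : a ∈ S) (haT : a ∉ T) (x y : ι → β) : mixedDiff f S x y = 0 :=
  mixedDiff_eq_zero_of_forall_corner haS fun R _ => hf fun k hk => by
    have : k ≠ a := by rintro rfl; exact haT hk
    simp [corner, this]

theorem mixedDiff_eq_zero_of_eq {f : (ι → β) → ℝ} {S : Finset ι} {x y : ι → β} {a : ι}
    (haS : a ∈ S) (hxy : x a = y a) : mixedDiff f S x y = 0 :=
  mixedDiff_eq_zero_of_forall_corner haS fun R _ => congrArg f <| funext fun k => by
    by_cases hk : k = a
    · subst hk; simp [corner, haS, hxy]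
    · simp [corner, hk]

theorem mixedDiff_add (f g : (ι → β) → ℝ) (S : Finset ι) (x y : ι → β) :
    mixedDiff (fun z => f z + g z) S x y = mixedDiff f S x y + mixedDiff g S x y := by
  simp only [mixedDiff, mul_add, sum_add_distrib]

theorem mixedDiff_sub (f g : (ι → β) → ℝ) (S : Finset ι) (x y : ι → β) :
    mixedDiff (fun z => f z - g z) S x y = mixedDiff f S x y - mixedDiff g S x y := by
  simp only [mixedDiff, mul_sub, sum_sub_distrib]

theorem mixedDiff_sum {α : Type*} (A : Finset α) (F : α → (ι → β) → ℝ) (S : Finset ι)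
    (x y : ι → β) :
    mixedDiff (fun z => ∑ a ∈ A, F a z) S x y = ∑ a ∈ A, mixedDiff (F a) S x y := by
  simp only [mixedDiff, mul_sum]
  exact sum_comm

theorem mixedDiff_comp {β γ : Type*} [Zero β] [Zero γ] (g : (ι → γ) → ℝ) (φ : ι → β → γ)
    (hφ : ∀ k, φ k 0 = 0) (S : Finset ι) (a b : ι → β) :
    mixedDiff (fun j => g fun k => φ k (j k)) S a b
      = mixedDiff g S (fun k => φ k (a k)) (fun k => φ k (b k)) := by
  refine sum_congr rfl fun R _ => congrArg _ (congrArg g (funext fun k => ?_))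
  simp only [corner]
  split_ifs <;> simp [hφ]

end MixedDifference

section InteractionRestriction

variable {d s : ℕ} {f g : (Fin d → ℝ) → ℝ}

theorem interactionRestriction_iff :
    InteractionRestriction d s f ↔ ∀ S : Finset (Fin d), s < #S → ∀ x y : Fin d → ℝ,
      (∀ k ∈ S, 0 ≤ x k ∧ x k < y k ∧ y k ≤ 1) → mixedDiff f S x y = 0 :=
  Iff.rfl

theorem corner_mem_unitCube {S R : Finset (Fin d)} (hR : R ⊆ S) {x y : Fin d → ℝ}
    (hxy : ∀ k ∈ S, 0 ≤ x k ∧ x k ≤ y k ∧ y k ≤ 1) : corner S R x y ∈ unitCube (Fin d) := by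
  intro k _
  by_cases hkR : k ∈ R
  · obtain ⟨h₀, h₁, h₂⟩ := hxy k (hR hkR)
    simp only [corner, hkR, if_true]
    exact ⟨h₀.trans h₁, h₂⟩
  · by_cases hkS : k ∈ S
    · obtain ⟨h₀, h₁, h₂⟩ := hxy k hkS
      simp only [corner, hkR, hkS, if_true, if_false]
      exact ⟨h₀, h₁.trans h₂⟩
    · simp [corner, hkR, hkS]

theorem InteractionRestriction.congr (hf : InteractionRestriction d s f)
    (hfg : Set.EqOn f g (unitCube (Fin d))) : InteractionRestriction d s g := by
  intro S hS x y hxy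
  calc mixedDiff g S x y = mixedDiff f S x y :=
        sum_congr rfl fun R hR => by
          rw [hfg (corner_mem_unitCube (mem_powerset.1 hR) fun k hk =>
            ⟨(hxy k hk).1, (hxy k hk).2.1.le, (hxy k hk).2.2⟩)]
    _ = 0 := hf S hS x y hxy

theorem interactionRestriction_of_dependsOn {T : Finset (Fin d)} (hf : DependsOn f T)
    (hT : #T ≤ s) : InteractionRestriction d s f := by
  intro S hS x y _
  obtain ⟨a, haS, haT⟩ := not_subset.1 fun h : S ⊆ T => (card_le_card h).not_gt (hT.trans_lt hS)
  exact mixedDiff_eq_zero_of_dependsOn hf haS haT x y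

theorem InteractionRestriction.add (hf : InteractionRestriction d s f)
    (hg : InteractionRestriction d s g) : InteractionRestriction d s fun z => f z + g z := by
  rw [interactionRestriction_iff] at *
  intro S hS x y hxy
  rw [mixedDiff_add, hf S hS x y hxy, hg S hS x y hxy, add_zero]

theorem InteractionRestriction.sub (hf : InteractionRestriction d s f)
    (hg : InteractionRestriction d s g) : InteractionRestriction d s fun z => f z - g z := by
  rw [interactionRestriction_iff] at *
  intro S hS x y hxy
  rw [mixedDiff_sub, hf S hS x y hxy, hg S hS x y hxy, sub_zero]

theorem InteractionRestriction.sum {α : Type*} {A : Finset α} {F : α → (Fin d → ℝ) → ℝ}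
    (hF : ∀ a ∈ A, InteractionRestriction d s (F a)) :
    InteractionRestriction d s fun z => ∑ a ∈ A, F a z := by
  simp only [interactionRestriction_iff] at *
  intro S hS x y hxy
  rw [mixedDiff_sum]
  exact sum_eq_zero fun a ha => hF a ha S hS x y hxy

theorem InteractionRestriction.mixedDiff_eq_zero (hf : InteractionRestriction d s f)
    {S : Finset (Fin d)} (hS : s < #S) {x y : Fin d → ℝ}
    (hxy : ∀ k ∈ S, 0 ≤ x k ∧ x k ≤ y k ∧ y k ≤ 1) : mixedDiff f S x y = 0 := by
  by_cases hlt : ∀ k ∈ S, x k < y k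
  · exact hf S hS x y fun k hk => ⟨(hxy k hk).1, hlt k hk, (hxy k hk).2.2⟩
  · push Not at hlt
    obtain ⟨a, haS, hyx⟩ := hlt
    exact mixedDiff_eq_zero_of_eq haS (le_antisymm (hxy a haS).2.1 hyx)

end InteractionRestriction

section TotallyConcave

variable {ι : Type*} [Fintype ι] [DecidableEq ι] {p : ι → ℕ} {x : (k : ι) → Fin (p k + 1) → ℝ}

theorem divDiff_eq_zero_of_affine {g : ℝ → ℝ} (a b : ℝ) (hg : ∀ z, g z = a * z + b) {q : ℕ}
    (hq : q = 2) {xs : Fin (q + 1) → ℝ} (hxs : StrictMono xs) : divDiff g q xs = 0 := by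
  subst hq
  have h01 : xs 1 - xs 0 ≠ 0 := sub_ne_zero.2 (hxs.injective.ne (by decide))
  have h12 : xs 2 - xs 1 ≠ 0 := sub_ne_zero.2 (hxs.injective.ne (by decide))
  rw [divDiff_two g hxs]
  simp only [hg, add_sub_add_right_eq_sub, ← mul_sub, mul_div_cancel_right₀ _ h01,
    mul_div_cancel_right₀ _ h12, sub_self, zero_div]

theorem mvDivDiff_monomial_eq_zero (S : Finset ι) {a : ι} (ha : p a = 2)
    (hx : StrictMono (x a)) : mvDivDiff (fun z => ∏ j ∈ S, z j) p x = 0 := by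
  rw [show _ = _ from mvDivDiff_prod_finset S (fun _ w => w) p x]
  refine prod_eq_zero (mem_univ a) ?_
  split_ifs
  · exact divDiff_eq_zero_of_affine 1 0 (fun z => by ring) ha hx
  · exact divDiff_eq_zero_of_affine 0 1 (fun z => by ring) ha hx

theorem mvDivDiff_const_eq_zero (c : ℝ) {a : ι} (ha : p a = 2) (hx : StrictMono (x a)) :
    mvDivDiff (fun _ => c) p x = 0 := by
  rw [show (fun _ : ι → ℝ => c) = fun z => c * ∏ j ∈ (∅ : Finset ι), z j by simp,
    mvDivDiff_const_mul, mvDivDiff_monomial_eq_zero ∅ ha hx, mul_zero]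

theorem mvDivDiff_hingeProd_nonneg (S : Finset ι) (c : ι → ℝ) (hp : ∀ k, p k ≤ 2)
    (hx : ∀ k, StrictMono (x k)) : 0 ≤ mvDivDiff (fun z => ∏ j ∈ S, max (z j - c j) 0) p x := by
  rw [show _ = _ from mvDivDiff_prod_finset S (fun k w => max (w - c k) 0) p x]
  refine prod_nonneg fun k _ => ?_
  split_ifs
  · exact divDiff_nonneg (fun _ => le_max_right _ _)
      (fun _ _ h => max_le_max (sub_le_sub_right h _) le_rfl) (convexOn_hinge (c k)) (hp k) (hx k)
  · exact divDiff_nonneg (fun _ => zero_le_one) monotone_const (convexOn_const 1 convex_univ)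
      (hp k) (hx k)

variable {d s : ℕ} {f : (Fin d → ℝ) → ℝ}

theorem TCRep.integrable_hingeProd (r : TCRep d) (S : Finset (Fin d)) {z : Fin d → ℝ}
    (hz : z ∈ unitCube (Fin d)) : Integrable (fun t => ∏ j ∈ S, max (z j - t j) 0) (r.ν S) := by
  have := r.finite S
  refine (integrable_const (1 : ℝ)).mono' (Continuous.aestronglyMeasurable <|
    continuous_finsetProd _ fun j _ => (continuous_const.sub (continuous_apply j)).max
      continuous_const) ?_
  filter_upwards [measure_eq_zero_iff_ae_notMem.1 (r.support S)] with t ht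
  simp only [Set.notMem_compl_iff] at ht
  rw [Real.norm_of_nonneg (prod_nonneg fun _ _ => le_max_right _ _)]
  exact prod_le_one (fun _ _ => le_max_right _ _) fun j hj =>
    max_le (by linarith [(ht.1 j hj).1, (hz j (Set.mem_univ j)).2]) zero_le_one

theorem MemTC.memTCP (hf : MemTC d s f) : MemTCP d f := by
  obtain ⟨r, hr⟩ := hf
  intro p hp ⟨a, ha⟩ x hx hx01
  have hcube : ∀ i : (k : Fin d) → Fin (p k + 1), (fun k => x k (i k)) ∈ unitCube (Fin d) :=
    fun i k _ => hx01 k (i k)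
  rw [mvDivDiff_congr fun i => hr _ (hcube i)]
  unfold TCRep.toFun
  rw [mvDivDiff_sub, mvDivDiff_add, mvDivDiff_sum, mvDivDiff_sum,
    mvDivDiff_const_eq_zero _ ha (hx a)]
  have hmonomial : ∑ S ∈ smallSets d s, mvDivDiff (fun z => r.β S * ∏ j ∈ S, z j) p x = 0 :=
    sum_eq_zero fun S _ => by
      rw [mvDivDiff_const_mul, mvDivDiff_monomial_eq_zero S ha (hx a), mul_zero]
  have hhinge : 0 ≤ ∑ S ∈ smallSets d s,
      mvDivDiff (fun z => ∫ t, ∏ j ∈ S, max (z j - t j) 0 ∂r.ν S) p x :=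
    sum_nonneg fun S _ => by
      rw [mvDivDiff_integral (fun t z => ∏ j ∈ S, max (z j - t j) 0) p x _
        fun i => r.integrable_hingeProd S (hcube i)]
      exact integral_nonneg fun t => mvDivDiff_hingeProd_nonneg S t hp hx
  linarith

theorem MemTC.interactionRestriction (hf : MemTC d s f) : InteractionRestriction d s f := by
  obtain ⟨r, hr⟩ := hf
  refine InteractionRestriction.congr ?_ fun z hz => (hr z hz).symm
  have hsmall : ∀ S ∈ smallSets d s, #S ≤ s := fun S hS => (mem_filter.1 hS).2.2
  refine ((interactionRestriction_of_dependsOn (T := ∅) (fun _ _ _ => rfl) (by simp)).add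
    (.sum fun S hS => interactionRestriction_of_dependsOn ?_ (hsmall S hS))).sub
    (.sum fun S hS => interactionRestriction_of_dependsOn ?_ (hsmall S hS))
  · exact fun z w h => by rw [prod_congr rfl fun j hj => h j hj]
  · exact fun z w h => integral_congr_ae <| .of_forall fun t =>
      prod_congr rfl fun j hj => by rw [h j hj]

end TotallyConcave

section HingeInterpolation

def hingeBasis (t : ℕ → ℝ) (e : ℕ) (z : ℝ) : ℝ :=
  if e = 0 then 1 else max (z - t (e - 1)) 0

/-- For `e = 0` these weights vanish, as `0 - 1 = 0` in `ℕ`. -/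
def slopeWeight (t : ℕ → ℝ) (e i : ℕ) : ℝ :=
  ((if i = e then 1 else 0) - if i = e - 1 then 1 else 0) / (t e - t (e - 1))

/-- The weights on the nodes `t 0, …, t m` of the functionals dual to the basis
`hingeBasis t e`, `e ≤ m`. -/
def dualWeight (t : ℕ → ℝ) (e i : ℕ) : ℝ :=
  if e = 0 then (if i = 0 then 1 else 0) else slopeWeight t e i - slopeWeight t (e - 1) i

variable {t : ℕ → ℝ} {m : ℕ}

theorem sum_slopeWeight_mul (t : ℕ → ℝ) (h : ℝ → ℝ) {e : ℕ} (he : e ≤ m) :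
    ∑ i ∈ range (m + 1), slopeWeight t e i * h (t i) = slope h (t (e - 1)) (t e) := by
  simp only [slopeWeight, sub_div, sub_mul, sum_sub_distrib, ite_div, ite_mul, one_div,
    zero_div, zero_mul, sum_ite_eq', mem_range, slope_def_field]
  rw [if_pos (by omega), if_pos (by omega)]
  ring

theorem sum_dualWeight_mul (t : ℕ → ℝ) (h : ℝ → ℝ) {e : ℕ} (he : e ≤ m) :
    ∑ i ∈ range (m + 1), dualWeight t e i * h (t i) = if e = 0 then h (t 0) else
      slope h (t (e - 1)) (t e) - slope h (t (e - 1 - 1)) (t (e - 1)) := by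
  unfold dualWeight
  split_ifs
  · simp
  · simp only [sub_mul, sum_sub_distrib, sum_slopeWeight_mul t h he,
      sum_slopeWeight_mul t h (show e - 1 ≤ m by omega)]

theorem sum_range_sub_mul_sub (D u : ℕ → ℝ) (hD : D 0 = 0) (X : ℝ) (l : ℕ) :
    ∑ e ∈ range l, (D (e + 1) - D e) * (X - u e)
      = D l * (X - u l) + ∑ e ∈ range l, D (e + 1) * (u (e + 1) - u e) := by
  induction l with
  | zero => simp [hD]
  | succ n ih => rw [sum_range_succ, ih, sum_range_succ]; ring

theorem sum_dualWeight_mul_hingeBasis (ht : StrictMono t) (h : ℝ → ℝ) {l : ℕ} (hl : l ≤ m) :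
    ∑ e ∈ range (m + 1), (∑ i ∈ range (m + 1), dualWeight t e i * h (t i)) * hingeBasis t e (t l)
      = h (t l) := by
  set D : ℕ → ℝ := fun e => slope h (t (e - 1)) (t e)
  have hterm : ∀ e ∈ range m,
      (∑ i ∈ range (m + 1), dualWeight t (e + 1) i * h (t i)) * hingeBasis t (e + 1) (t l)
        = if e < l then (D (e + 1) - D e) * (t l - t e) else 0 := fun e he => by
    rw [sum_dualWeight_mul t h (by simp at he; omega), if_neg e.succ_ne_zero, hingeBasis,
      if_neg e.succ_ne_zero, add_tsub_cancel_right]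
    split_ifs with hel
    · rw [max_eq_left (sub_nonneg.2 (ht hel).le)]; rfl
    · rw [max_eq_right (sub_nonpos.2 (ht.monotone (not_lt.1 hel))), mul_zero]
  have hslope : ∀ e, D (e + 1) * (t (e + 1) - t e) = h (t (e + 1)) - h (t e) := fun e => by
    simp only [D, add_tsub_cancel_right, slope_def_field]
    exact div_mul_cancel₀ _ (sub_ne_zero.2 (ht (Nat.lt_succ_self e)).ne')
  have hfilter : (range m).filter (· < l) = range l := by
    ext e; simp only [mem_filter, mem_range]; omega
  rw [sum_range_succ', sum_congr rfl hterm, ← sum_filter, hfilter,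
    sum_range_sub_mul_sub D t (slope_same h _) (t l) l, sum_congr rfl fun e _ => hslope e,
    sum_range_sub (fun e => h (t e)), sum_dualWeight_mul t h (Nat.zero_le m)]
  simp [hingeBasis]

theorem sum_dualWeight_mul_hingeBasis_eq_ite (ht : StrictMono t) {i l : ℕ} (hi : i ≤ m)
    (hl : l ≤ m) :
    ∑ e ∈ range (m + 1), dualWeight t e i * hingeBasis t e (t l) = if i = l then 1 else 0 := by
  have key := sum_dualWeight_mul_hingeBasis ht (fun z => if z = t i then 1 else 0) hl
  simp only [ht.injective.eq_iff, mul_ite, mul_one, mul_zero, sum_ite_eq', mem_range,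
    if_pos (Nat.lt_succ_of_le hi)] at key
  rw [key]
  exact if_congr eq_comm rfl rfl

end HingeInterpolation

section TensorGrid

variable {ι : Type*} [Fintype ι] [DecidableEq ι] {m : ι → ℕ} {t : ι → ℕ → ℝ}

def gridBox (m : ι → ℕ) : Finset (ι → ℕ) :=
  Fintype.piFinset fun k => range (m k + 1)

/-- The coefficient of `∏ k, hingeBasis (t k) (e k) (z k)` in the tensor-product hinge
interpolant of `g` on the grid `t`. -/
def gridCoeff (g : (ι → ℝ) → ℝ) (t : ι → ℕ → ℝ) (m : ι → ℕ) (e : ι → ℕ) : ℝ :=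
  ∑ j ∈ gridBox m, (∏ k, dualWeight (t k) (e k) (j k)) * g fun k => t k (j k)

theorem mem_gridBox {j : ι → ℕ} : j ∈ gridBox m ↔ ∀ k, j k ≤ m k := by
  simp [gridBox]

theorem sum_gridCoeff_mul_prod_hingeBasis (ht : ∀ k, StrictMono (t k)) (g : (ι → ℝ) → ℝ)
    {l : ι → ℕ} (hl : l ∈ gridBox m) :
    ∑ e ∈ gridBox m, gridCoeff g t m e * ∏ k, hingeBasis (t k) (e k) (t k (l k))
      = g fun k => t k (l k) := by
  have hdual : ∀ j ∈ gridBox m,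
      ∑ e ∈ gridBox m, ∏ k, dualWeight (t k) (e k) (j k) * hingeBasis (t k) (e k) (t k (l k))
        = if j = l then 1 else 0 := fun j hj => by
    rw [gridBox, ← prod_univ_sum (fun k => range (m k + 1))
      (fun k a => dualWeight (t k) a (j k) * hingeBasis (t k) a (t k (l k)))]
    rw [prod_congr rfl fun k _ =>
      sum_dualWeight_mul_hingeBasis_eq_ite (ht k) (mem_gridBox.1 hj k) (mem_gridBox.1 hl k),
      Fintype.prod_boole]
    exact if_congr funext_iff.symm rfl rfl
  calc ∑ e ∈ gridBox m, gridCoeff g t m e * ∏ k, hingeBasis (t k) (e k) (t k (l k))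
      = ∑ j ∈ gridBox m, (g fun k => t k (j k)) * ∑ e ∈ gridBox m,
          ∏ k, dualWeight (t k) (e k) (j k) * hingeBasis (t k) (e k) (t k (l k)) := by
        simp only [gridCoeff, sum_mul, mul_sum, prod_mul_distrib]
        rw [sum_comm]
        exact sum_congr rfl fun _ _ => sum_congr rfl fun _ _ => by ring
    _ = ∑ j ∈ gridBox m, (g fun k => t k (j k)) * if j = l then 1 else 0 :=
        sum_congr rfl fun j hj => by rw [hdual j hj]
    _ = g fun k => t k (l k) := by
        simp only [mul_ite, mul_one, mul_zero]
        rw [sum_ite_eq', if_pos hl]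

end TensorGrid

section DividedDifferenceCoefficients

def coeffOrder : ℕ → ℕ
  | 0 => 0
  | 1 => 1
  | _ + 2 => 2

def gridScale (t : ℕ → ℝ) (e : ℕ) : ℝ :=
  if 2 ≤ e then t e - t (e - 2) else 1

theorem coeffOrder_le_two (e : ℕ) : coeffOrder e ≤ 2 := by
  rcases e with _ | _ | _ <;> simp [coeffOrder]

theorem coeffOrder_le_self (e : ℕ) : coeffOrder e ≤ e := by
  rcases e with _ | _ | _ <;> simp [coeffOrder]

theorem coeffOrder_eq_two {e : ℕ} (he : 2 ≤ e) : coeffOrder e = 2 := by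
  rcases e with _ | _ | _ <;> first | omega | rfl

theorem gridScale_pos {t : ℕ → ℝ} (ht : StrictMono t) (e : ℕ) : 0 < gridScale t e := by
  unfold gridScale
  split_ifs with he
  · exact sub_pos.2 (ht (by omega))
  · exact one_pos

theorem dualWeight_eq_zero {t : ℕ → ℝ} {e i : ℕ} (hi : i < e - coeffOrder e ∨ e < i) :
    dualWeight t e i = 0 := by
  match e with
  | 0 =>
    simp only [coeffOrder] at hi
    simp only [dualWeight, if_true]
    rw [if_neg (by omega)]
  | 1 =>
    simp only [coeffOrder] at hi
    simp [dualWeight, slopeWeight, show i ≠ 1 by omega, show i ≠ 0 by omega]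
  | n + 2 =>
    simp only [coeffOrder, show n + 2 - 2 = n by omega] at hi
    simp [dualWeight, slopeWeight, show i ≠ n + 2 by omega, show i ≠ n + 1 by omega,
      show i ≠ n by omega]

theorem dualWeight_one_apply (t : ℕ → ℝ) (a : Fin 2) :
    dualWeight t 1 a = 1 / ∏ j ∈ univ.erase a, (t a - t j) := by
  match a with
  | 0 =>
    rw [show univ.erase (0 : Fin 2) = {1} by decide]
    simp [dualWeight, slopeWeight]
    rw [← neg_sub (t 1) (t 0), inv_neg, neg_div, one_div]
  | 1 =>
    rw [show univ.erase (1 : Fin 2) = {0} by decide]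
    simp [dualWeight, slopeWeight]

theorem dualWeight_add_two_apply {t : ℕ → ℝ} (ht : StrictMono t) (n : ℕ) (a : Fin 3) :
    dualWeight t (n + 2) (n + a)
      = (t (n + 2) - t n) / ∏ j ∈ univ.erase a, (t (n + a) - t (n + j)) := by
  have h01 : t n < t (n + 1) := ht (by omega)
  have h12 : t (n + 1) < t (n + 2) := ht (by omega)
  have : t (n + 1) - t n ≠ 0 := by linarith
  have : t (n + 2) - t (n + 1) ≠ 0 := by linarith
  have : t (n + 2) - t n ≠ 0 := by linarith
  have : t n - t (n + 1) ≠ 0 := by linarith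
  have : t (n + 1) - t (n + 2) ≠ 0 := by linarith
  have : t n - t (n + 2) ≠ 0 := by linarith
  match a with
  | 0 =>
    rw [show univ.erase (0 : Fin 3) = {1, 2} by decide]
    simp [dualWeight, slopeWeight]
    field_simp
    ring
  | 1 =>
    rw [show univ.erase (1 : Fin 3) = {0, 2} by decide]
    simp [dualWeight, slopeWeight]
    field_simp
    ring
  | 2 =>
    rw [show univ.erase (2 : Fin 3) = {0, 1} by decide]
    simp [dualWeight, slopeWeight]
    field_simp

theorem dualWeight_sub_coeffOrder_add {t : ℕ → ℝ} (ht : StrictMono t) (e : ℕ)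
    (a : Fin (coeffOrder e + 1)) :
    dualWeight t e (e - coeffOrder e + a) = gridScale t e /
      ∏ j ∈ univ.erase a, (t (e - coeffOrder e + a) - t (e - coeffOrder e + j)) := by
  match e, a with
  | 0, 0 =>
    show dualWeight t 0 0 = gridScale t 0 / ∏ j ∈ (univ : Finset (Fin 1)).erase 0, (t 0 - t j)
    rw [show (univ : Finset (Fin 1)).erase 0 = ∅ by decide]
    simp [dualWeight, gridScale]
  | 1, a =>
    rw [show 1 - coeffOrder 1 = 0 from rfl, gridScale, if_neg (by omega)]
    simp only [zero_add]
    exact dualWeight_one_apply t a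
  | n + 2, a =>
    rw [show n + 2 - coeffOrder (n + 2) = n from rfl, gridScale, if_pos (by omega),
      show n + 2 - 2 = n from rfl]
    exact dualWeight_add_two_apply ht n a

end DividedDifferenceCoefficients

section GridCoefficients

variable {ι : Type*} [Fintype ι] [DecidableEq ι] {m : ι → ℕ} {t : ι → ℕ → ℝ}

theorem gridCoeff_eq_mul_mvDivDiff (ht : ∀ k, StrictMono (t k)) (g : (ι → ℝ) → ℝ)
    {e : ι → ℕ} (he : e ∈ gridBox m) :
    gridCoeff g t m e = (∏ k, gridScale (t k) (e k)) * mvDivDiff g (fun k => coeffOrder (e k))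
      (fun k a => t k (e k - coeffOrder (e k) + a)) := by
  have hle : ∀ k, e k ≤ m k := mem_gridBox.1 he
  have hord := fun k => coeffOrder_le_self (e k)
  rw [mvDivDiff, mul_sum, gridCoeff]
  symm
  refine sum_of_injOn (fun a k => e k - coeffOrder (e k) + a k) ?_ ?_ ?_ ?_
  · intro a _ a' _ h
    funext k
    exact Fin.ext (by have := congrFun h k; simp only at this; omega)
  · intro a _
    refine mem_gridBox.2 fun k => ?_
    show e k - coeffOrder (e k) + a k ≤ m k
    have := hord k
    have := (a k).isLt
    have := hle k
    omega
  · intro j _ hj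
    obtain ⟨k, hk⟩ : ∃ k, j k < e k - coeffOrder (e k) ∨ e k < j k := by
      by_contra! h
      refine hj ⟨fun k => ⟨j k - (e k - coeffOrder (e k)), by have := h k; omega⟩,
        mem_coe.2 (mem_univ _), funext fun k => ?_⟩
      have := h k
      simp only
      omega
    rw [prod_eq_zero (mem_univ k) (dualWeight_eq_zero hk), zero_mul]
  · intro a _
    simp only [prod_congr rfl fun k _ => dualWeight_sub_coeffOrder_add (ht k) (e k) (a k),
      prod_div_distrib]
    ring

end GridCoefficients

section CornerExpansion

variable {ι : Type*} [Fintype ι] [DecidableEq ι]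

def cornerWeight (S : Finset ι) (a b : ι → ℕ) (k : ι) (i : ℕ) : ℝ :=
  if k ∈ S then (if i = b k then 1 else 0) - (if i = a k then 1 else 0)
  else if i = 0 then 1 else 0

theorem prod_cornerWeight (S : Finset ι) (a b j : ι → ℕ) :
    ∏ k, cornerWeight S a b k (j k)
      = ∑ R ∈ S.powerset, (-1) ^ (#S - #R) * if j = corner S R a b then 1 else 0 := by
  rw [← prod_mul_prod_compl S]
  simp only [cornerWeight]
  rw [prod_congr rfl fun k hk => if_pos hk,
    prod_congr rfl fun k hk => if_neg (mem_compl.1 hk)]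
  simp only [sub_eq_add_neg]
  rw [prod_add, sum_mul]
  refine sum_congr rfl fun R hR => ?_
  have hRS := mem_powerset.1 hR
  have hδ : (if j = corner S R a b then (1 : ℝ) else 0)
      = ∏ k, if j k = corner S R a b k then 1 else 0 := by
    rw [Fintype.prod_boole]
    exact if_congr funext_iff rfl rfl
  rw [prod_neg, card_sdiff_of_subset hRS, hδ, ← prod_mul_prod_compl S, ← prod_sdiff hRS]
  have h₁ : ∀ k ∈ R, (if j k = b k then (1 : ℝ) else 0)
      = if j k = corner S R a b k then 1 else 0 := fun k hk => by simp [corner, hk]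
  have h₂ : ∀ k ∈ S \ R, (if j k = a k then (1 : ℝ) else 0)
      = if j k = corner S R a b k then 1 else 0 := fun k hk => by
    simp [corner, (mem_sdiff.1 hk).1, (mem_sdiff.1 hk).2]
  have h₃ : ∀ k ∈ Sᶜ, (if j k = 0 then (1 : ℝ) else 0)
      = if j k = corner S R a b k then 1 else 0 := fun k hk => by
    have hkS := mem_compl.1 hk
    have hkR : k ∉ R := fun h => hkS (hRS h)
    simp [corner, hkS, hkR]
  rw [prod_congr rfl h₁, prod_congr rfl h₂, prod_congr rfl h₃]
  ring

variable {m : ι → ℕ}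

theorem corner_mem_gridBox {S R : Finset ι} {a b : ι → ℕ} (ha : a ∈ gridBox m)
    (hb : b ∈ gridBox m) : corner S R a b ∈ gridBox m := by
  refine mem_gridBox.2 fun k => ?_
  simp only [corner]
  split_ifs
  exacts [mem_gridBox.1 hb k, mem_gridBox.1 ha k, Nat.zero_le _]

theorem sum_prod_cornerWeight_mul (S : Finset ι) {a b : ι → ℕ} (ha : a ∈ gridBox m)
    (hb : b ∈ gridBox m) (G : (ι → ℕ) → ℝ) :
    ∑ j ∈ gridBox m, (∏ k, cornerWeight S a b k (j k)) * G j = mixedDiff G S a b := by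
  simp only [prod_cornerWeight, sum_mul, mul_assoc, ite_mul, one_mul, zero_mul]
  rw [sum_comm]
  refine sum_congr rfl fun R _ => ?_
  rw [← mul_sum, sum_ite_eq', if_pos (corner_mem_gridBox ha hb)]

end CornerExpansion

section CoefficientSigns

variable {d s : ℕ} {g : (Fin d → ℝ) → ℝ} {m : Fin d → ℕ} {t : Fin d → ℕ → ℝ}

theorem node_mem_Icc {u : ℕ → ℝ} (hu : Monotone u) {n : ℕ} (h0 : u 0 = 0) (hn : u n = 1)
    {j : ℕ} (hj : j ≤ n) : u j ∈ Set.Icc (0 : ℝ) 1 :=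
  ⟨h0 ▸ hu (Nat.zero_le j), hn ▸ hu hj⟩

theorem gridCoeff_nonpos (hg : MemTCP d g) (ht : ∀ k, StrictMono (t k)) (ht0 : ∀ k, t k 0 = 0)
    (htm : ∀ k, t k (m k) = 1) {e : Fin d → ℕ} (he : e ∈ gridBox m) (h2 : ∃ k, 2 ≤ e k) :
    gridCoeff g t m e ≤ 0 := by
  rw [gridCoeff_eq_mul_mvDivDiff ht g he]
  refine mul_nonpos_of_nonneg_of_nonpos (prod_nonneg fun k _ => (gridScale_pos (ht k) _).le) <|
    hg _ (fun k => coeffOrder_le_two _) (h2.imp fun k => coeffOrder_eq_two) _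
      (fun k a b hab => ht k (Nat.add_lt_add_left hab _)) fun k a => ?_
  refine node_mem_Icc (ht k).monotone (ht0 k) (htm k) ?_
  have := a.isLt
  have := coeffOrder_le_self (e k)
  have := mem_gridBox.1 he k
  omega

/-- Interaction restriction annihilates every tensor-product functional on the grid whose
factors are combinations of differences `δ_q - δ_{q-1}` on `S` and `δ_0` off `S`. -/
theorem InteractionRestriction.sum_gridBox_prod_mul_eq_zero (hg : InteractionRestriction d s g)
    (ht : ∀ k, StrictMono (t k)) (ht0 : ∀ k, t k 0 = 0) (htm : ∀ k, t k (m k) = 1)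
    {S : Finset (Fin d)} (hS : s < #S) (Q : Fin d → Finset ℕ) (hQ : ∀ k, ∀ q ∈ Q k, q ≤ m k)
    (c : Fin d → ℕ → ℝ) {w : Fin d → ℕ → ℝ}
    (hw : ∀ k i, w k i = ∑ q ∈ Q k, c k q * cornerWeight S (fun _ => q - 1) (fun _ => q) k i) :
    ∑ j ∈ gridBox m, (∏ k, w k (j k)) * g (fun k => t k (j k)) = 0 := by
  calc ∑ j ∈ gridBox m, (∏ k, w k (j k)) * g (fun k => t k (j k))
      = ∑ σ ∈ Fintype.piFinset Q, (∏ k, c k (σ k)) * ∑ j ∈ gridBox m,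
          (∏ k, cornerWeight S (fun k => σ k - 1) σ k (j k)) * g fun k => t k (j k) := by
        simp only [hw, prod_univ_sum, sum_mul, mul_sum]
        rw [sum_comm]
        exact sum_congr rfl fun σ _ => sum_congr rfl fun j _ => by
          rw [← mul_assoc, ← prod_mul_distrib]; rfl
    _ = ∑ σ ∈ Fintype.piFinset Q, (∏ k, c k (σ k)) *
          mixedDiff g S (fun k => t k (σ k - 1)) (fun k => t k (σ k)) := by
        refine sum_congr rfl fun σ hσ => ?_
        have hσm : σ ∈ gridBox m :=
          mem_gridBox.2 fun k => hQ k _ (Fintype.mem_piFinset.1 hσ k)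
        rw [sum_prod_cornerWeight_mul S (mem_gridBox.2 fun k => (Nat.sub_le _ _).trans
          (mem_gridBox.1 hσm k)) hσm, mixedDiff_comp g t ht0]
    _ = 0 := by
        refine sum_eq_zero fun σ hσ => ?_
        rw [hg.mixedDiff_eq_zero hS fun k _ => ?_, mul_zero]
        have := hQ k _ (Fintype.mem_piFinset.1 hσ k)
        exact ⟨(node_mem_Icc (ht k).monotone (ht0 k) (htm k) (by omega)).1,
          (ht k).monotone (Nat.sub_le _ _), (node_mem_Icc (ht k).monotone (ht0 k) (htm k) this).2⟩

theorem gridCoeff_eq_zero (hg : InteractionRestriction d s g) (ht : ∀ k, StrictMono (t k))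
    (ht0 : ∀ k, t k 0 = 0) (htm : ∀ k, t k (m k) = 1) {e : Fin d → ℕ} (he : e ∈ gridBox m)
    (hs : s < #(univ.filter fun k => e k ≠ 0)) : gridCoeff g t m e = 0 := by
  set S := univ.filter fun k => e k ≠ 0
  have hm := mem_gridBox.1 he
  refine hg.sum_gridBox_prod_mul_eq_zero ht ht0 htm hs
    (fun k => if k ∈ S then {e k - 1, e k} else {0}) (fun k q hq => ?_)
    (fun k q => if k ∈ S then (if q = e k then 1 else -1) / (t k q - t k (q - 1)) else 1)
    fun k i => ?_
  · have := hm k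
    split_ifs at hq <;> simp at hq <;> omega
  · by_cases hk : k ∈ S
    · have hek : e k ≠ 0 := (mem_filter.1 hk).2
      simp only [hk, if_true, cornerWeight]
      rw [sum_pair (by omega), if_neg (by omega), if_pos rfl, dualWeight, if_neg hek]
      simp only [slopeWeight]
      ring
    · have hek : e k = 0 := by simpa [S] using hk
      simp [hk, cornerWeight, dualWeight, hek]

end CoefficientSigns

section Grid

theorem exists_strictMono_extend {n : ℕ} {v : Fin (n + 1) → ℝ} (hv : StrictMono v) :
    ∃ u : ℕ → ℝ, StrictMono u ∧ ∀ i : Fin (n + 1), u i = v i := by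
  refine ⟨fun l => v ⟨min l n, Nat.lt_succ_of_le (min_le_right _ _)⟩ + (l - n : ℕ),
    strictMono_nat_of_lt_succ fun l => ?_, fun i => ?_⟩
  · rcases lt_or_ge l n with hl | hl
    · simp only [min_eq_left hl.le, min_eq_left (Nat.succ_le_of_lt hl),
        Nat.sub_eq_zero_of_le hl.le, Nat.sub_eq_zero_of_le (Nat.succ_le_of_lt hl)]
      simp [hv (Fin.mk_lt_mk.2 (Nat.lt_succ_self l))]
    · simp only [min_eq_right hl, min_eq_right (hl.trans (Nat.le_succ l))]
      gcongr
      omega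
  · have hi := Nat.le_of_lt_succ i.isLt
    simp [min_eq_left hi, Nat.sub_eq_zero_of_le hi]

theorem exists_strictMono_nodes (A : Finset ℝ) (hA : ∀ a ∈ A, a ∈ Set.Icc (0 : ℝ) 1) :
    ∃ (n : ℕ) (u : ℕ → ℝ), StrictMono u ∧ u 0 = 0 ∧ u n = 1 ∧ ∀ a ∈ A, ∃ l ≤ n, u l = a := by
  set B := insert 0 (insert 1 A)
  have hB : ∀ b ∈ B, b ∈ Set.Icc (0 : ℝ) 1 := by
    simp only [B, mem_insert, forall_eq_or_imp]
    exact ⟨by norm_num, by norm_num, hA⟩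
  have hcard : #B = #B - 1 + 1 := (Nat.sub_add_cancel (card_pos.2 ⟨0, mem_insert_self _ _⟩)).symm
  set v := B.orderEmbOfFin hcard
  have hv : ∀ b ∈ B, ∃ i, v i = b := fun b hb => by
    rwa [← mem_coe, ← range_orderEmbOfFin B hcard] at hb
  obtain ⟨u, hu, huv⟩ := exists_strictMono_extend v.strictMono
  refine ⟨#B - 1, u, hu, ?_, ?_, fun a ha => ?_⟩
  · obtain ⟨i, hi⟩ := hv 0 (mem_insert_self _ _)
    refine le_antisymm ?_ (huv 0 ▸ hB _ (orderEmbOfFin_mem B hcard 0)).1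
    rw [← hi, show u 0 = v 0 from huv 0]
    exact v.monotone (Fin.zero_le i)
  · obtain ⟨i, hi⟩ := hv 1 (mem_insert_of_mem (mem_insert_self _ _))
    refine le_antisymm (huv (Fin.last _) ▸ hB _ (orderEmbOfFin_mem B hcard _)).2 ?_
    rw [← hi, show u (#B - 1) = v (Fin.last _) from huv (Fin.last _)]
    exact v.monotone (Fin.le_last i)
  · obtain ⟨i, hi⟩ := hv a (mem_insert_of_mem (mem_insert_of_mem ha))
    exact ⟨i, Nat.le_of_lt_succ i.isLt, (huv i).trans hi⟩

end Grid

section Representation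

variable {d : ℕ}

theorem TCRep.exists_toFun_eq_of_atoms {α : Type*} (s : ℕ) (β₀ : ℝ) (β : Finset (Fin d) → ℝ)
    (A : Finset (Fin d) → Finset α) (pt : α → Fin d → ℝ) (w : α → ℝ)
    (hpt : ∀ S, ∀ a ∈ A S, pt a ∈ tcSupport d S) (hw : ∀ S, ∀ a ∈ A S, 0 ≤ w a) :
    ∃ r : TCRep d, ∀ z, r.toFun s z = β₀ + ∑ S ∈ smallSets d s, β S * ∏ j ∈ S, z j
      - ∑ S ∈ smallSets d s, ∑ a ∈ A S, w a * ∏ j ∈ S, max (z j - pt a j) 0 := by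
  refine ⟨⟨β₀, β, fun S => ∑ a ∈ A S, ENNReal.ofReal (w a) • Measure.dirac (pt a),
    fun S => ⟨?_⟩, fun S => ?_⟩, fun z => ?_⟩
  · simp [Measure.finsetSum_apply, ENNReal.sum_lt_top]
  · rw [Measure.finsetSum_apply]
    refine sum_eq_zero fun a ha => ?_
    rw [Measure.smul_apply, Measure.dirac_apply, Set.indicator_of_notMem
      (Set.notMem_compl_iff.2 (hpt S a ha)), smul_zero]
  · refine congrArg _ (sum_congr rfl fun S _ => ?_)
    rw [integral_finsetSum_measure fun a _ => (integrable_dirac (by simp)).smul_measure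
      ENNReal.ofReal_ne_top]
    refine sum_congr rfl fun a ha => ?_
    rw [integral_smul_measure, integral_dirac, ENNReal.toReal_ofReal (hw S a ha), smul_eq_mul]

end Representation

section Interpolation

variable {d s : ℕ} {g : (Fin d → ℝ) → ℝ} {m : Fin d → ℕ} {t : Fin d → ℕ → ℝ}

theorem prod_hingeBasis (t : Fin d → ℕ → ℝ) (e : Fin d → ℕ) (z : Fin d → ℝ) :
    ∏ k, hingeBasis (t k) (e k) (z k)
      = ∏ k ∈ univ.filter (fun k => e k ≠ 0), max (z k - t k (e k - 1)) 0 := by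
  rw [prod_filter]
  exact prod_congr rfl fun k _ => by simp only [hingeBasis, ite_not]

theorem sum_gridBox_eq_add_sum_smallSets {F : (Fin d → ℕ) → ℝ}
    (hF : ∀ e ∈ gridBox m, s < #(univ.filter fun k => e k ≠ 0) → F e = 0) :
    ∑ e ∈ gridBox m, F e = F 0 + ∑ S ∈ smallSets d s,
      ∑ e ∈ (gridBox m).filter (fun e => univ.filter (fun k => e k ≠ 0) = S), F e := by
  have hempty : ∅ ∉ smallSets d s := by simp [smallSets]
  have hzero : (gridBox m).filter (fun e => univ.filter (fun k => e k ≠ 0) = ∅) = {0} := by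
    ext e
    simp +contextual [mem_gridBox, filter_eq_empty_iff, funext_iff]
  rw [← sum_fiberwise (gridBox m) (fun e => univ.filter fun k => e k ≠ 0) F,
    ← sum_subset (subset_univ (insert ∅ (smallSets d s))), sum_insert hempty, hzero, sum_singleton]
  intro S _ hS
  refine sum_eq_zero fun e he => hF e (mem_filter.1 he).1 ?_
  rw [(mem_filter.1 he).2]
  simp only [mem_insert, smallSets, mem_filter, mem_univ, true_and, not_or, not_and_or] at hS
  have := card_pos.2 (nonempty_iff_ne_empty.2 hS.1)
  omega

theorem exists_two_le_of_ne {e : Fin d → ℕ} {S : Finset (Fin d)}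
    (hS : univ.filter (fun k => e k ≠ 0) = S) (he : e ≠ fun k => if k ∈ S then 1 else 0) :
    ∃ k ∈ S, 2 ≤ e k := by
  by_contra! h
  have hmem : ∀ k, k ∈ S ↔ e k ≠ 0 := fun k => by simp [← hS]
  refine he (funext fun k => ?_)
  by_cases hk : k ∈ S
  · have := h k hk
    have := (hmem k).1 hk
    simp only [hk, if_true]
    omega
  · simp only [hk, if_false]
    exact not_not.1 (mt (hmem k).2 hk)

theorem knot_mem_tcSupport (ht : ∀ k, StrictMono (t k)) (ht0 : ∀ k, t k 0 = 0)
    (htm : ∀ k, t k (m k) = 1) {e : Fin d → ℕ} (he : e ∈ gridBox m) {S : Finset (Fin d)}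
    (hS : univ.filter (fun k => e k ≠ 0) = S) (h2 : ∃ k ∈ S, 2 ≤ e k) :
    (fun k => t k (e k - 1)) ∈ tcSupport d S := by
  obtain ⟨k, hkS, hk⟩ := h2
  refine ⟨fun j hj => ⟨ht0 j ▸ (ht j).monotone (Nat.zero_le _), htm j ▸ ht j ?_⟩, k, hkS,
    (ht0 k ▸ ht k (by omega : 0 < e k - 1)).ne'⟩
  have : e j ≠ 0 := (mem_filter.1 (hS ▸ hj : j ∈ univ.filter _)).2
  have := mem_gridBox.1 he j
  omega

theorem exists_tcRep_eq_on_gridBox (hg : MemTCP d g) (hIR : InteractionRestriction d s g)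
    (ht : ∀ k, StrictMono (t k)) (ht0 : ∀ k, t k 0 = 0) (htm : ∀ k, t k (m k) = 1) :
    ∃ r : TCRep d, ∀ l ∈ gridBox m, r.toFun s (fun k => t k (l k)) = g fun k => t k (l k) := by
  set ind : Finset (Fin d) → Fin d → ℕ := fun S k => if k ∈ S then 1 else 0
  set fiber : Finset (Fin d) → Finset (Fin d → ℕ) := fun S =>
    (gridBox m).filter fun e => univ.filter (fun k => e k ≠ 0) = S
  have hsupp_ind : ∀ S, univ.filter (fun k => ind S k ≠ 0) = S := fun S => by ext; simp [ind]
  have hind : ∀ S, ind S ∈ fiber S := fun S => by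
    refine mem_filter.2 ⟨mem_gridBox.2 fun k => ?_, hsupp_ind S⟩
    have : m k ≠ 0 := fun h => by simpa [h, ht0 k] using htm k
    simp only [ind]; split_ifs <;> omega
  have hA : ∀ S, ∀ e ∈ (fiber S).erase (ind S),
      e ∈ gridBox m ∧ univ.filter (fun k => e k ≠ 0) = S ∧ ∃ k ∈ S, 2 ≤ e k := fun S e he => by
    obtain ⟨hne, he⟩ := mem_erase.1 he
    exact ⟨(mem_filter.1 he).1, (mem_filter.1 he).2, exists_two_le_of_ne (mem_filter.1 he).2 hne⟩
  obtain ⟨r, hr⟩ := TCRep.exists_toFun_eq_of_atoms s (gridCoeff g t m 0)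
    (fun S => gridCoeff g t m (ind S))
    (fun S => (fiber S).erase (ind S)) (fun e k => t k (e k - 1)) (fun e => -gridCoeff g t m e)
    (fun S e he => knot_mem_tcSupport ht ht0 htm (hA S e he).1 (hA S e he).2.1 (hA S e he).2.2)
    (fun S e he => neg_nonneg.2 <| gridCoeff_nonpos hg ht ht0 htm (hA S e he).1 <|
      (hA S e he).2.2.imp fun _ => And.right)
  refine ⟨r, fun l hl => ?_⟩
  have hfiber : ∀ S, ∑ e ∈ (gridBox m).filter (fun e => univ.filter (fun k => e k ≠ 0) = S),
        gridCoeff g t m e * ∏ k, hingeBasis (t k) (e k) (t k (l k))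
      = gridCoeff g t m (ind S) * ∏ j ∈ S, t j (l j) + ∑ e ∈ (fiber S).erase (ind S),
        gridCoeff g t m e * ∏ j ∈ S, max (t j (l j) - t j (e j - 1)) 0 := fun S => by
    rw [← add_sum_erase _ _ (hind S), prod_hingeBasis, hsupp_ind]
    congr 1
    · refine congrArg _ (prod_congr rfl fun j hj => ?_)
      have : 0 ≤ t j (l j) := ht0 j ▸ (ht j).monotone (Nat.zero_le _)
      simp [ind, hj, ht0, this]
    · exact sum_congr rfl fun e he => by rw [prod_hingeBasis, (hA S e he).2.1]
  rw [hr, ← sum_gridCoeff_mul_prod_hingeBasis ht g hl,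
    sum_gridBox_eq_add_sum_smallSets fun e he hs => by
      rw [gridCoeff_eq_zero hIR ht ht0 htm he hs, zero_mul]]
  rw [sum_congr rfl fun S _ => hfiber S]
  simp only [sum_add_distrib, neg_mul, sum_neg_distrib, hingeBasis, Pi.zero_apply,
    if_true, prod_const_one, mul_one]
  ring

end Interpolation

theorem exists_tcRep_eq_on_design {d s n : ℕ} {g : (Fin d → ℝ) → ℝ} (x : Fin n → Fin d → ℝ)
    (hx : ∀ i, x i ∈ unitCube (Fin d)) (hg : MemTCP d g) (hIR : InteractionRestriction d s g) :
    ∃ r : TCRep d, ∀ i, r.toFun s (x i) = g (x i) := by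
  choose m t ht ht0 htm hnode using fun k => exists_strictMono_nodes (univ.image fun i => x i k)
    (by simpa using fun i => hx i k (Set.mem_univ k))
  obtain ⟨r, hr⟩ := exists_tcRep_eq_on_gridBox hg hIR ht ht0 htm
  refine ⟨r, fun i => ?_⟩
  choose l hlm hl using fun k => hnode k (x i k) (mem_image_of_mem _ (mem_univ i))
  rw [show x i = fun k => t k (l k) from funext fun k => (hl k).symm]
  exact hr l (mem_gridBox.2 hlm)

theorem lse_reduction_from_popoviciu_general (d s n : ℕ)
    (x : Fin n → Fin d → ℝ) (hx : ∀ i, x i ∈ unitCube (Fin d)) (y : Fin n → ℝ)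
    (fhat : (Fin d → ℝ) → ℝ) (hmem : MemTC d s fhat)
    (hmin : ∀ g, MemTC d s g →
      ∑ i, (y i - fhat (x i)) ^ 2 ≤ ∑ i, (y i - g (x i)) ^ 2) :
    (MemTCP d fhat ∧ InteractionRestriction d s fhat ∧
      ∀ g, MemTCP d g → InteractionRestriction d s g →
        ∑ i, (y i - fhat (x i)) ^ 2 ≤ ∑ i, (y i - g (x i)) ^ 2) ∧
    (s = d → ∀ g, MemTCP d g →
      ∑ i, (y i - fhat (x i)) ^ 2 ≤ ∑ i, (y i - g (x i)) ^ 2) := by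
  have hle : ∀ g, MemTCP d g → InteractionRestriction d s g →
      ∑ i, (y i - fhat (x i)) ^ 2 ≤ ∑ i, (y i - g (x i)) ^ 2 := fun g hg hgIR => by
    obtain ⟨r, hr⟩ := exists_tcRep_eq_on_design x hx hg hgIR
    simpa only [hr] using hmin (r.toFun s) ⟨r, fun _ _ => rfl⟩
  refine ⟨⟨hmem.memTCP, hmem.interactionRestriction, hle⟩, ?_⟩
  rintro rfl g hg
  exact hle g hg <| interactionRestriction_of_dependsOn (T := univ)
    (by simpa using dependsOn_univ g) (by simp)

/-- **Proposition (reduction from the Popoviciu class).**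
Every least squares minimizer over `F^{d,s}_TC` also minimizes the least squares
criterion over all `f ∈ F^d_TCP` satisfying the interaction restriction condition of
order `s`; in particular (when `s = d`), it minimizes over the entire class `F^d_TCP`. -/
theorem lse_reduction_from_popoviciu (d s n : ℕ) (hs1 : 1 ≤ s) (hsd : s ≤ d)
    (x : Fin n → Fin d → ℝ) (hx : ∀ i, x i ∈ unitCube (Fin d)) (y : Fin n → ℝ)
    (fhat : (Fin d → ℝ) → ℝ) (hmem : MemTC d s fhat)
    (hmin : ∀ g, MemTC d s g →
      ∑ i, (y i - fhat (x i)) ^ 2 ≤ ∑ i, (y i - g (x i)) ^ 2) :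
    (MemTCP d fhat ∧ InteractionRestriction d s fhat ∧
      ∀ g, MemTCP d g → InteractionRestriction d s g →
        ∑ i, (y i - fhat (x i)) ^ 2 ≤ ∑ i, (y i - g (x i)) ^ 2) ∧
    (s = d → ∀ g, MemTCP d g →
      ∑ i, (y i - fhat (x i)) ^ 2 ≤ ∑ i, (y i - g (x i)) ^ 2) :=
  lse_reduction_from_popoviciu_general d s n x hx y fhat hmem hmin

end
end

section
/- Let x^(1),…,x^(n) ∈ [0,1]^d and 1 ≤ s ≤ d. Suppose f ∈ F^d_TCP satisfies the interaction restriction condition of order s. Then there exists g ∈ F^{d,s}_TC such that g(x^(i)) = f(x^(i)) for all i = 1,…,n. -/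
open MeasureTheory ProbabilityTheory

noncomputable section

/-!
On each axis take the sorted grid `0 = a₀ < a₁ < ⋯ < a_m ≤ 1` of the design coordinates.
At grid points a function of one variable has the hinge expansion
`φ a_l = φ 0 + ∑_{j < m} (a_l - a_j)₊ κ_j φ`, where `κ_0 φ` is the first divided difference on
`[a₀, a₁]` and, for `j ≥ 1`, `κ_j φ` is `a_{j+1} - a_{j-1}` times the second divided difference
at `a_{j-1}, a_j, a_{j+1}`. Tensorizing, `f w` is the sum over `S ⊆ [d]` of the mixed differences
`Δ_S f w` between `0` and `w` in the coordinates of `S` (with `0` off `S`). The interaction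
restriction kills every `Δ_S` with `|S| > s`, and expanding the others in hinges gives
`β_S ∏_{j ∈ S} w_j` plus hinge terms whose coefficients are mixed divided differences of orders
`≤ 2`, one of them equal to `2`. Total concavity makes these coefficients nonpositive, so they are
minus the masses of point measures at the knots.
-/

open Finset Finsupp
open scoped NNReal

def divDiffWeights (p : ℕ) (xs : Fin (p + 1) → ℝ) : ℝ →₀ ℝ :=
  ∑ i, single (xs i) (∏ j ∈ univ.erase i, (xs i - xs j))⁻¹

def slopeWeights (u v : ℝ) : ℝ →₀ ℝ := (v - u)⁻¹ • (single v 1 - single u 1)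

theorem divDiffWeights_zero (xs : Fin 1 → ℝ) : divDiffWeights 0 xs = single (xs 0) 1 := by
  simp [divDiffWeights]

theorem divDiffWeights_one (xs : Fin 2 → ℝ) :
    divDiffWeights 1 xs = slopeWeights (xs 0) (xs 1) := by
  have e0 : univ.erase (0 : Fin 2) = {1} := by decide
  have e1 : univ.erase (1 : Fin 2) = {0} := by decide
  rw [divDiffWeights, slopeWeights, Fin.sum_univ_two, e0, e1]
  simp only [prod_singleton, ← smul_single_one _ (_ : ℝ)⁻¹]
  match_scalars
  · rw [← neg_sub, inv_neg]; ring
  · simp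

theorem smul_divDiffWeights_two (xs : Fin 3 → ℝ) (h01 : xs 0 ≠ xs 1) (h12 : xs 1 ≠ xs 2)
    (h02 : xs 0 ≠ xs 2) :
    (xs 2 - xs 0) • divDiffWeights 2 xs =
      slopeWeights (xs 1) (xs 2) - slopeWeights (xs 0) (xs 1) := by
  have e0 : univ.erase (0 : Fin 3) = {1, 2} := by decide
  have e1 : univ.erase (1 : Fin 3) = {0, 2} := by decide
  have e2 : univ.erase (2 : Fin 3) = {0, 1} := by decide
  rw [divDiffWeights, slopeWeights, slopeWeights, Fin.sum_univ_three, e0, e1, e2]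
  simp (disch := decide) only [prod_pair, ← smul_single_one _ (_ : ℝ)⁻¹]
  have := sub_ne_zero.mpr h01
  have := sub_ne_zero.mpr h12
  have := sub_ne_zero.mpr h02
  match_scalars <;> field_simp <;> ring

def knotWeights (a : ℕ → ℝ) : ℕ → ℝ →₀ ℝ
  | 0 => slopeWeights (a 0) (a 1)
  | j + 1 => slopeWeights (a (j + 1)) (a (j + 2)) - slopeWeights (a j) (a (j + 1))

theorem sum_range_succ_smul_knotWeights (a c : ℕ → ℝ) (n : ℕ) :
    ∑ j ∈ range (n + 1), c j • knotWeights a j =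
      ∑ j ∈ range n, (c j - c (j + 1)) • slopeWeights (a j) (a (j + 1)) +
        c n • slopeWeights (a n) (a (n + 1)) := by
  induction n with
  | zero => simp [knotWeights]
  | succ n ih =>
    rw [sum_range_succ, ih, sum_range_succ, knotWeights]
    simp only [sub_smul, smul_sub]
    abel

theorem sum_hinge_smul_knotWeights {a : ℕ → ℝ} {m l : ℕ} (ha : StrictMonoOn a (Set.Iic m))
    (hl : l ≤ m) :
    ∑ j ∈ range m, max (a l - a j) 0 • knotWeights a j = single (a l) 1 - single (a 0) 1 := by
  obtain _ | n := m
  · obtain rfl : l = 0 := Nat.le_zero.mp hl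
    simp
  set c : ℕ → ℝ := fun j => max (a l - a j) 0
  have hmono := ha.monotoneOn
  have hc : ∀ j ≤ n + 1, l ≤ j → c j = 0 := fun j hj hlj =>
    max_eq_right (sub_nonpos.mpr (hmono (Set.mem_Iic.mpr hl) (Set.mem_Iic.mpr hj) hlj))
  have hterm : ∀ j ∈ range (n + 1), (c j - c (j + 1)) • slopeWeights (a j) (a (j + 1)) =
      single (a (min (j + 1) l)) 1 - single (a (min j l)) 1 := by
    intro j hj
    have hj := mem_range.mp hj
    rcases lt_or_ge j l with hjl | hlj
    · have hc' : ∀ i ≤ l, c i = a l - a i := fun i hi =>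
        max_eq_left (sub_nonneg.mpr (hmono (Set.mem_Iic.mpr (hi.trans hl)) (Set.mem_Iic.mpr hl) hi))
      have hlt : a j < a (j + 1) :=
        ha (Set.mem_Iic.mpr (by omega)) (Set.mem_Iic.mpr (by omega)) (Nat.lt_succ_self j)
      rw [hc' j hjl.le, hc' (j + 1) hjl, min_eq_left hjl, min_eq_left hjl.le, slopeWeights,
        smul_smul, show a l - a j - (a l - a (j + 1)) = a (j + 1) - a j by ring,
        mul_inv_cancel₀ (sub_ne_zero.mpr hlt.ne'), one_smul]
    · rw [hc j (by omega) hlj, hc (j + 1) (by omega) (by omega), min_eq_right hlj,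
        min_eq_right (by omega), sub_self, zero_smul, sub_self]
  have hlast : c n • slopeWeights (a n) (a (n + 1)) =
      (c n - c (n + 1)) • slopeWeights (a n) (a (n + 1)) := by
    rw [hc (n + 1) le_rfl hl, sub_zero]
  rw [sum_range_succ_smul_knotWeights, hlast, ← sum_range_succ, sum_congr rfl hterm,
    sum_range_sub (fun j => single (a (min j l)) (1 : ℝ)), min_eq_right hl, Nat.zero_min]

/-- The order is a variable `q` so that the lemma applies where the order is only propositionally
equal to `if j = 0 then 1 else 2`. -/
theorem knotWeights_eq_smul_divDiffWeights {a : ℕ → ℝ} {m j : ℕ}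
    (ha : StrictMonoOn a (Set.Iic m)) (hj : j < m) {q : ℕ} (hq : q = if j = 0 then 1 else 2) :
    knotWeights a j =
      (if j = 0 then 1 else a (j + 1) - a (j - 1)) • divDiffWeights q fun i => a (j - 1 + i) := by
  subst hq
  obtain _ | j := j
  · change slopeWeights (a 0) (a 1) = (1 : ℝ) • divDiffWeights 1 fun i : Fin 2 => a (0 - 1 + i)
    rw [one_smul, divDiffWeights_one]
    simp
  · have hlt : ∀ i < 2, a (j + i) < a (j + i + 1) := fun i hi =>
      ha (Set.mem_Iic.mpr (by omega)) (Set.mem_Iic.mpr (by omega)) (Nat.lt_succ_self _)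
    have h01 := hlt 0 (by norm_num)
    have h12 := hlt 1 (by norm_num)
    have key := smul_divDiffWeights_two (fun i : Fin 3 => a (j + i)) (by simpa using h01.ne)
      (by simpa using h12.ne) (by simpa using (h01.trans h12).ne)
    simp only [Fin.isValue, Fin.val_zero, Fin.val_one, Fin.val_two, add_zero] at key
    exact key.symm

theorem MultilinearMap.map_piecewise_sum {R ι α M N : Type*} [CommSemiring R] [AddCommMonoid M]
    [AddCommMonoid N] [Module R M] [Module R N] [Fintype ι] [DecidableEq ι] [DecidableEq α]
    (F : MultilinearMap R (fun _ : ι => M) N) (S : Finset ι) (A : ι → Finset α) (g : ι → α → M)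
    (m₀ : ι → M) (a₀ : α) :
    F (S.piecewise (fun k => ∑ j ∈ A k, g k j) m₀) =
      ∑ J ∈ Fintype.piFinset (S.piecewise A fun _ => {a₀}),
        F (S.piecewise (fun k => g k (J k)) m₀) := by
  have hsum : S.piecewise (fun k => ∑ j ∈ A k, g k j) m₀ =
      fun k => ∑ j ∈ S.piecewise A (fun _ => {a₀}) k, S.piecewise g (fun k _ => m₀ k) k j := by
    funext k
    by_cases hk : k ∈ S <;> simp [hk]
  rw [hsum, MultilinearMap.map_sum_finset]
  refine Finset.sum_congr rfl fun J _ => congrArg F (funext fun k => ?_)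
  by_cases hk : k ∈ S <;> simp [hk]

section TensorEval

variable {ι : Type*} [Fintype ι] [DecidableEq ι]

/-- On weights supported in the frame `∏ k, T k` this is `μ ↦ ∑ z, (∏ k, μ k (z k)) * f z`;
restricting `z` to the fixed frame makes it multilinear on all of `ℝ →₀ ℝ`. -/
def tensorEval (T : ι → Finset ℝ) (f : (ι → ℝ) → ℝ) :
    MultilinearMap ℝ (fun _ : ι => ℝ →₀ ℝ) ℝ :=
  ∑ z ∈ Fintype.piFinset T,
    f z • (MultilinearMap.mkPiAlgebra ℝ ι ℝ).compLinearMap fun k => Finsupp.lapply (z k)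

variable {T : ι → Finset ℝ} {f : (ι → ℝ) → ℝ}

theorem tensorEval_apply (μ : ι → ℝ →₀ ℝ) :
    tensorEval T f μ = ∑ z ∈ Fintype.piFinset T, f z * ∏ k, μ k (z k) := by
  simp [tensorEval]

theorem tensorEval_single {w : ι → ℝ} (hw : ∀ k, w k ∈ T k) :
    tensorEval T f (fun k => single (w k) 1) = f w := by
  rw [tensorEval_apply, Finset.sum_eq_single w]
  · simp
  · intro z _ hzw
    obtain ⟨k, hk⟩ := Function.ne_iff.mp hzw
    exact mul_eq_zero_of_right _ (prod_eq_zero (mem_univ k) (Finsupp.single_eq_of_ne hk))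
  · exact fun h => (h (Fintype.mem_piFinset.mpr hw)).elim

theorem tensorEval_piecewise_single_sub_single (S : Finset ι) {x y : ι → ℝ}
    (hx : ∀ k, x k ∈ T k) (hy : ∀ k, y k ∈ T k) (h0 : ∀ k, 0 ∈ T k) :
    tensorEval T f (S.piecewise (fun k => single (y k) 1 - single (x k) 1) fun _ => single 0 1) =
      ∑ R ∈ S.powerset, (-1 : ℝ) ^ (S.card - R.card) *
        f (fun k => if k ∈ R then y k else if k ∈ S then x k else 0) := by
  set m' : ι → ℝ →₀ ℝ := S.piecewise (fun k => -single (x k) 1) fun _ => single 0 1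
  have hsplit : (S.piecewise (fun k => single (y k) 1 - single (x k) 1) fun _ => single 0 1) =
      S.piecewise ((fun k => single (y k) 1) + m') m' := by
    funext k
    by_cases hk : k ∈ S <;> simp [m', hk, sub_eq_add_neg]
  rw [hsplit, MultilinearMap.map_piecewise_add]
  refine Finset.sum_congr rfl fun R hR => ?_
  have hRS := Finset.mem_powerset.mp hR
  have hterm : R.piecewise (fun k => single (y k) 1) m' = fun k =>
      (if k ∈ S \ R then -1 else 1 : ℝ) •
        single (if k ∈ R then y k else if k ∈ S then x k else 0) 1 := by
    funext k
    by_cases hkR : k ∈ R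
    · simp [hkR]
    · by_cases hkS : k ∈ S <;> simp [m', hkR, hkS]
  rw [hterm, MultilinearMap.map_smul_univ, tensorEval_single, Finset.prod_ite_mem,
    Finset.univ_inter, Finset.prod_const, Finset.card_sdiff_of_subset hRS, smul_eq_mul]
  intro k
  split_ifs
  exacts [hy k, hx k, h0 k]

theorem eq_sum_tensorEval_piecewise {w : ι → ℝ} (hw : ∀ k, w k ∈ T k) :
    f w = ∑ S : Finset ι,
      tensorEval T f (S.piecewise (fun k => single (w k) 1 - single 0 1) fun _ => single 0 1) := by
  rw [← MultilinearMap.map_add_univ, ← tensorEval_single (f := f) hw]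
  congr 1
  funext k
  simp

theorem tensorEval_divDiffWeights (p : ι → ℕ) (xs : (k : ι) → Fin (p k + 1) → ℝ)
    (hxs : ∀ k i, xs k i ∈ T k) :
    tensorEval T f (fun k => divDiffWeights (p k) (xs k)) = mvDivDiff f p xs := by
  simp only [divDiffWeights, MultilinearMap.map_sum_finset, Fintype.piFinset_univ, mvDivDiff]
  refine Finset.sum_congr rfl fun i _ => ?_
  simp_rw [← smul_single_one _ (_ : ℝ)⁻¹]
  rw [MultilinearMap.map_smul_univ, tensorEval_single fun k => hxs k (i k), smul_eq_mul,
    Finset.prod_inv_distrib, div_eq_mul_inv, mul_comm]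

end TensorEval

theorem tensorEval_piecewise_eq_zero_of_lt_card {d s : ℕ} {T : Fin d → Finset ℝ}
    {f : (Fin d → ℝ) → ℝ} (hir : InteractionRestriction d s f) {w : Fin d → ℝ}
    (hw : w ∈ unitCube (Fin d)) (hwT : ∀ k, w k ∈ T k) (h0 : ∀ k, 0 ∈ T k)
    {S : Finset (Fin d)} (hS : s < S.card) :
    tensorEval T f (S.piecewise (fun k => single (w k) 1 - single 0 1) fun _ => single 0 1) =
      0 := by
  by_cases hz : ∃ k ∈ S, w k = 0
  · obtain ⟨k, hk, hwk⟩ := hz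
    exact MultilinearMap.map_coord_zero _ k (by simp [hk, hwk])
  push Not at hz
  rw [tensorEval_piecewise_single_sub_single (x := fun _ => 0) S h0 hwT h0]
  exact hir S hS (fun _ => 0) w fun k hk =>
    ⟨le_rfl, lt_of_le_of_ne (hw k trivial).1 (hz k hk).symm, (hw k trivial).2⟩

theorem integral_finsetSum_smul_dirac {α κ : Type*} [MeasurableSpace α]
    [MeasurableSingletonClass α] (K : Finset κ) (c : κ → ℝ≥0) (t : κ → α) (φ : α → ℝ) :
    ∫ y, φ y ∂(∑ i ∈ K, c i • Measure.dirac (t i)) = ∑ i ∈ K, c i * φ (t i) := by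
  rw [integral_finsetSum_measure fun i _ =>
    (integrable_dirac enorm_lt_top).smul_measure_nnreal]
  simp [integral_smul_nnreal_measure, integral_dirac, NNReal.smul_def]

theorem exists_enum_of_subset_Icc (G : Finset ℝ) (hG : ∀ t ∈ G, t ∈ Set.Icc (0 : ℝ) 1) :
    ∃ (m : ℕ) (a : ℕ → ℝ), 1 ≤ m ∧ a 0 = 0 ∧ a m ≤ 1 ∧ StrictMonoOn a (Set.Iic m) ∧
      ∀ t ∈ G, ∃ l ≤ m, t = a l := by
  set H := insert 0 (insert 1 G)
  have hH : ∀ t ∈ H, t ∈ Set.Icc (0 : ℝ) 1 := by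
    simp only [H, mem_insert, forall_eq_or_imp]
    exact ⟨by norm_num, by norm_num, hG⟩
  have hN : 2 ≤ H.card := by
    simpa [card_pair] using card_le_card (show {0, 1} ⊆ H by simp [H, insert_subset_iff])
  set e := H.orderEmbOfFin rfl
  refine ⟨H.card - 1, fun j => e ⟨min j (H.card - 1), by omega⟩, by omega, ?_,
    (hH _ (H.orderEmbOfFin_mem rfl _)).2, fun i hi j hj hij => e.strictMono ?_, fun t ht => ?_⟩
  · change e ⟨min 0 (H.card - 1), _⟩ = 0
    simp only [Nat.zero_min, e, orderEmbOfFin_zero]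
    exact le_antisymm (min'_le H 0 (mem_insert_self _ _)) (hH _ (min'_mem _ _)).1
  · simp only [Set.mem_Iic] at hi hj
    simp only [Fin.lt_def]
    omega
  · obtain ⟨i, hi⟩ : t ∈ Set.range e := by
      rw [range_orderEmbOfFin]
      exact mem_insert_of_mem (mem_insert_of_mem ht)
    refine ⟨i, by omega, ?_⟩
    rw [← hi]
    exact congrArg e (Fin.ext (min_eq_left (by omega)).symm)

/-- Only the values `a k j` with `j ≤ m k` are meaningful. -/
structure CubeGrid (ι : Type*) where
  m : ι → ℕ
  a : ι → ℕ → ℝ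
  one_le_m : ∀ k, 1 ≤ m k
  a_zero : ∀ k, a k 0 = 0
  a_m_le_one : ∀ k, a k (m k) ≤ 1
  strictMonoOn : ∀ k, StrictMonoOn (a k) (Set.Iic (m k))

namespace CubeGrid

variable {ι : Type*} (g : CubeGrid ι)

theorem a_nonneg {k : ι} {j : ℕ} (hj : j ≤ g.m k) : 0 ≤ g.a k j :=
  g.a_zero k ▸ (g.strictMonoOn k).monotoneOn (Set.mem_Iic.mpr (Nat.zero_le _))
    (Set.mem_Iic.mpr hj) (Nat.zero_le j)

theorem a_pos {k : ι} {j : ℕ} (hj : j ≤ g.m k) (hj0 : j ≠ 0) : 0 < g.a k j :=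
  g.a_zero k ▸ g.strictMonoOn k (Set.mem_Iic.mpr (Nat.zero_le _)) (Set.mem_Iic.mpr hj)
    (Nat.pos_of_ne_zero hj0)

theorem a_lt_one {k : ι} {j : ℕ} (hj : j < g.m k) : g.a k j < 1 :=
  (g.strictMonoOn k (Set.mem_Iic.mpr hj.le) (Set.mem_Iic.mpr le_rfl) hj).trans_le
    (g.a_m_le_one k)

theorem a_le_one {k : ι} {j : ℕ} (hj : j ≤ g.m k) : g.a k j ≤ 1 := by
  rcases hj.lt_or_eq with hj | rfl
  exacts [(g.a_lt_one hj).le, g.a_m_le_one k]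

def frame (k : ι) : Finset ℝ := (range (g.m k + 1)).image (g.a k)

theorem a_mem_frame {k : ι} {j : ℕ} (hj : j ≤ g.m k) : g.a k j ∈ g.frame k :=
  mem_image_of_mem _ (mem_range.mpr (Nat.lt_succ_of_le hj))

theorem zero_mem_frame (k : ι) : 0 ∈ g.frame k :=
  g.a_zero k ▸ g.a_mem_frame (Nat.zero_le _)

def IsNode (w : ι → ℝ) : Prop := ∀ k, ∃ l ≤ g.m k, w k = g.a k l

theorem IsNode.mem_frame {g : CubeGrid ι} {w : ι → ℝ} (hw : g.IsNode w) (k : ι) :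
    w k ∈ g.frame k := by
  obtain ⟨l, hl, hwl⟩ := hw k
  exact hwl ▸ g.a_mem_frame hl

theorem exists_isNode {n : ℕ} (x : Fin n → ι → ℝ)
    (hx : ∀ i, x i ∈ unitCube ι) : ∃ g : CubeGrid ι, ∀ i, g.IsNode (x i) := by
  choose m a one_le_m a_zero a_m_le_one strictMonoOn hnode using fun k =>
    exists_enum_of_subset_Icc (univ.image fun i => x i k) fun t ht => by
      obtain ⟨i, -, rfl⟩ := mem_image.mp ht
      exact hx i k (Set.mem_univ k)
  exact ⟨⟨m, a, one_le_m, a_zero, a_m_le_one, strictMonoOn⟩, fun i k =>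
    hnode k (x i k) (mem_image_of_mem _ (mem_univ i))⟩

def knot (J : ι → ℕ) : ι → ℝ := fun k => g.a k (J k)

variable [DecidableEq ι]

def knotSlots (S : Finset ι) (J : ι → ℕ) : ι → ℝ →₀ ℝ :=
  S.piecewise (fun k => knotWeights (g.a k) (J k)) fun _ => single 0 1

variable [Fintype ι]

def knotIndices (S : Finset ι) : Finset (ι → ℕ) :=
  Fintype.piFinset (S.piecewise (fun k => range (g.m k)) fun _ => {0})

theorem mem_knotIndices {S : Finset ι} {J : ι → ℕ} :
    J ∈ g.knotIndices S ↔ (∀ k ∈ S, J k < g.m k) ∧ ∀ k ∉ S, J k = 0 := by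
  simp only [knotIndices, Fintype.mem_piFinset]
  refine ⟨fun h => ⟨fun k hk => ?_, fun k hk => ?_⟩, fun h k => ?_⟩
  · simpa [hk] using h k
  · simpa [hk] using h k
  · by_cases hk : k ∈ S <;> simp [hk, h.1 k, h.2 k]

theorem zero_mem_knotIndices (S : Finset ι) : 0 ∈ g.knotIndices S :=
  g.mem_knotIndices.mpr ⟨fun k _ => g.one_le_m k, fun _ _ => rfl⟩

theorem tensorEval_piecewise_eq_sum_knotSlots (f : (ι → ℝ) → ℝ) {w : ι → ℝ} (hw : g.IsNode w)
    (S : Finset ι) :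
    tensorEval g.frame f (S.piecewise (fun k => single (w k) 1 - single 0 1) fun _ => single 0 1) =
      ∑ J ∈ g.knotIndices S,
        (∏ k ∈ S, max (w k - g.knot J k) 0) * tensorEval g.frame f (g.knotSlots S J) := by
  have h1d : ∀ k, single (w k) 1 - single 0 1 =
      ∑ j ∈ range (g.m k), max (w k - g.a k j) 0 • knotWeights (g.a k) j := by
    intro k
    obtain ⟨l, hl, hwl⟩ := hw k
    rw [hwl, sum_hinge_smul_knotWeights (g.strictMonoOn k) hl, g.a_zero]
  simp_rw [h1d]
  rw [MultilinearMap.map_piecewise_sum _ S _ _ _ 0]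
  refine sum_congr rfl fun J _ => ?_
  rw [← smul_eq_mul, ← MultilinearMap.map_piecewise_smul]
  congr 1
  funext k
  by_cases hk : k ∈ S <;> simp [knotSlots, knot, hk]

def knotOrder (S : Finset ι) (J : ι → ℕ) (k : ι) : ℕ :=
  if k ∈ S then (if J k = 0 then 1 else 2) else 0

/-- By truncated subtraction the nodes of `k ∈ S` are `a 0, a 1` if `J k = 0` and
`a (J k - 1), a (J k), a (J k + 1)` otherwise; off `S` the only node is `a 0 = 0`. -/
def knotNodes (S : Finset ι) (J : ι → ℕ) (k : ι) (i : Fin (knotOrder S J k + 1)) : ℝ :=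
  g.a k (J k - 1 + i)

def knotScale (S : Finset ι) (J : ι → ℕ) (k : ι) : ℝ :=
  if k ∈ S then (if J k = 0 then 1 else g.a k (J k + 1) - g.a k (J k - 1)) else 1

variable {g} {S : Finset ι} {J : ι → ℕ}

theorem sub_one_add_le_m (hJ : J ∈ g.knotIndices S) (k : ι) (i : Fin (knotOrder S J k + 1)) :
    J k - 1 + i ≤ g.m k := by
  obtain ⟨hlt, hout⟩ := g.mem_knotIndices.mp hJ
  have hi := i.isLt
  by_cases hk : k ∈ S
  · have := hlt k hk
    have := g.one_le_m k
    by_cases h0 : J k = 0 <;> simp only [knotOrder, hk, h0, if_true, if_false] at hi <;> omega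
  · simp only [knotOrder, hk, if_false] at hi
    have := hout k hk
    omega

theorem strictMono_knotNodes (hJ : J ∈ g.knotIndices S) (k : ι) :
    StrictMono (g.knotNodes S J k) := fun i i' hii' =>
  g.strictMonoOn k (Set.mem_Iic.mpr (sub_one_add_le_m hJ k i))
    (Set.mem_Iic.mpr (sub_one_add_le_m hJ k i')) (by simp only [Fin.lt_def] at hii'; omega)

theorem knotScale_nonneg (hJ : J ∈ g.knotIndices S) (k : ι) : 0 ≤ g.knotScale S J k := by
  obtain ⟨hlt, -⟩ := g.mem_knotIndices.mp hJ
  simp only [knotScale]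
  split_ifs with hk
  · exact zero_le_one
  · have := hlt k hk
    exact sub_nonneg.mpr ((g.strictMonoOn k).monotoneOn (Set.mem_Iic.mpr (by omega))
      (Set.mem_Iic.mpr (by omega)) (by omega))
  · exact zero_le_one

theorem knotSlots_eq_smul_divDiffWeights (hJ : J ∈ g.knotIndices S) :
    g.knotSlots S J =
      fun k => g.knotScale S J k • divDiffWeights (knotOrder S J k) (g.knotNodes S J k) := by
  obtain ⟨hlt, hout⟩ := g.mem_knotIndices.mp hJ
  funext k
  by_cases hk : k ∈ S
  · simp only [knotSlots, piecewise_eq_of_mem _ _ _ hk, knotScale, hk, if_true]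
    exact knotWeights_eq_smul_divDiffWeights (g.strictMonoOn k) (hlt k hk)
      (by simp [knotOrder, hk])
  · have hδ : ∀ q, q = 0 →
        single (0 : ℝ) (1 : ℝ) = divDiffWeights q fun i => g.a k (J k - 1 + i) := by
      rintro q rfl
      simp [divDiffWeights_zero, hout k hk, g.a_zero]
    simp only [knotSlots, piecewise_eq_of_notMem _ _ _ hk, knotScale, hk, if_false, one_smul]
    exact hδ _ (by simp [knotOrder, hk])

end CubeGrid

namespace CubeGrid

variable {d : ℕ} (g : CubeGrid (Fin d))

theorem IsNode.mem_unitCube {g : CubeGrid (Fin d)} {w : Fin d → ℝ} (hw : g.IsNode w) :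
    w ∈ unitCube (Fin d) :=
  fun k _ => by
    obtain ⟨l, hl, hwl⟩ := hw k
    exact hwl ▸ ⟨g.a_nonneg hl, g.a_le_one hl⟩

theorem knot_mem_tcSupport {S : Finset (Fin d)} {J : Fin d → ℕ}
    (hJ : J ∈ g.knotIndices S) (hJ0 : J ≠ 0) : g.knot J ∈ tcSupport d S := by
  obtain ⟨hlt, hout⟩ := g.mem_knotIndices.mp hJ
  refine ⟨fun k hk => ⟨g.a_nonneg (hlt k hk).le, g.a_lt_one (hlt k hk)⟩, ?_⟩
  obtain ⟨k, hk⟩ := Function.ne_iff.mp hJ0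
  have hkS : k ∈ S := by_contra fun h => hk (hout k h)
  exact ⟨k, hkS, (g.a_pos (hlt k hkS).le hk).ne'⟩

theorem tensorEval_knotSlots_nonpos {f : (Fin d → ℝ) → ℝ} (hf : MemTCP d f)
    {S : Finset (Fin d)} {J : Fin d → ℕ} (hJ : J ∈ g.knotIndices S) (hJ0 : J ≠ 0) :
    tensorEval g.frame f (g.knotSlots S J) ≤ 0 := by
  obtain ⟨k₀, hk₀ : J k₀ ≠ 0⟩ := Function.ne_iff.mp hJ0
  have hk₀S : k₀ ∈ S := by_contra fun h => hk₀ ((g.mem_knotIndices.mp hJ).2 k₀ h)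
  rw [g.knotSlots_eq_smul_divDiffWeights hJ, MultilinearMap.map_smul_univ,
    tensorEval_divDiffWeights (T := g.frame) _ (g.knotNodes S J) fun k i =>
      g.a_mem_frame (sub_one_add_le_m hJ k i), smul_eq_mul]
  refine mul_nonpos_of_nonneg_of_nonpos (prod_nonneg fun k _ => knotScale_nonneg hJ k)
    (hf _ (fun k => ?_) ⟨k₀, by simp [knotOrder, hk₀S, hk₀]⟩ _ (strictMono_knotNodes hJ)
      fun k i => ⟨g.a_nonneg (sub_one_add_le_m hJ k i), g.a_le_one (sub_one_add_le_m hJ k i)⟩)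
  simp only [knotOrder]
  split_ifs <;> omega

/-- The knot index `0` puts all knots at the origin, where the hinge is the monomial
`∏ j ∈ S, x j`; it supplies `β S`, and every other knot carries a point mass. -/
def tcRep (f : (Fin d → ℝ) → ℝ) : TCRep d where
  β0 := f 0
  β S := tensorEval g.frame f (g.knotSlots S 0)
  ν S := ∑ J ∈ (g.knotIndices S).erase 0,
    (-tensorEval g.frame f (g.knotSlots S J)).toNNReal • Measure.dirac (g.knot J)
  finite _ := inferInstance
  support S := by
    simp only [Measure.coe_finsetSum, Finset.sum_apply, Measure.smul_apply]
    refine sum_eq_zero fun J hJ => ?_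
    obtain ⟨hJ0, hJ⟩ := mem_erase.mp hJ
    simp [Measure.dirac_apply, g.knot_mem_tcSupport hJ hJ0]

theorem tensorEval_piecewise_eq_tcRep {f : (Fin d → ℝ) → ℝ} (hf : MemTCP d f)
    {w : Fin d → ℝ} (hw : g.IsNode w) (S : Finset (Fin d)) :
    tensorEval g.frame f (S.piecewise (fun k => single (w k) 1 - single 0 1) fun _ => single 0 1) =
      (g.tcRep f).β S * ∏ k ∈ S, w k -
        ∫ t, ∏ k ∈ S, max (w k - t k) 0 ∂(g.tcRep f).ν S := by
  rw [g.tensorEval_piecewise_eq_sum_knotSlots f hw,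
    ← Finset.add_sum_erase _ _ (g.zero_mem_knotIndices S)]
  dsimp only [tcRep]
  rw [integral_finsetSum_smul_dirac, sub_eq_add_neg, ← sum_neg_distrib]
  congr 1
  · rw [mul_comm]
    congr 1
    refine prod_congr rfl fun k _ => ?_
    simp [knot, g.a_zero, (hw.mem_unitCube k trivial).1]
  · refine sum_congr rfl fun J hJ => ?_
    obtain ⟨hJ0, hJ⟩ := mem_erase.mp hJ
    rw [Real.coe_toNNReal _ (neg_nonneg.mpr (g.tensorEval_knotSlots_nonpos hf hJ hJ0))]
    ring

theorem toFun_tcRep {s : ℕ} {f : (Fin d → ℝ) → ℝ} (hf : MemTCP d f)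
    (hir : InteractionRestriction d s f) {w : Fin d → ℝ} (hw : g.IsNode w) :
    (g.tcRep f).toFun s w = f w := by
  have hvanish : ∀ S ∈ univ, S ∉ insert ∅ (smallSets d s) →
      tensorEval g.frame f
        (S.piecewise (fun k => single (w k) 1 - single 0 1) fun _ => single 0 1) = 0 := by
    intro S _ hS
    refine tensorEval_piecewise_eq_zero_of_lt_card hir hw.mem_unitCube hw.mem_frame
      g.zero_mem_frame ?_
    simp only [mem_insert, smallSets, mem_filter, mem_univ, true_and, not_or, not_and_or,
      not_le] at hS
    have := card_pos.mpr (nonempty_iff_ne_empty.mpr hS.1)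
    omega
  rw [eq_sum_tensorEval_piecewise (f := f) hw.mem_frame, ← sum_subset (subset_univ _) hvanish,
    sum_insert (by simp [smallSets]), TCRep.toFun, add_sub_assoc, ← sum_sub_distrib,
    sum_congr rfl fun S _ => g.tensorEval_piecewise_eq_tcRep hf hw S]
  congr 1
  rw [piecewise_empty, tensorEval_single g.zero_mem_frame]
  rfl

end CubeGrid

theorem exists_tc_interpolant_general (d s n : ℕ)
    (x : Fin n → Fin d → ℝ) (hx : ∀ i, x i ∈ unitCube (Fin d))
    (f : (Fin d → ℝ) → ℝ) (hf : MemTCP d f) (hir : InteractionRestriction d s f) :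
    ∃ g : (Fin d → ℝ) → ℝ, MemTC d s g ∧ ∀ i, g (x i) = f (x i) := by
  obtain ⟨g, hg⟩ := CubeGrid.exists_isNode x hx
  exact ⟨(g.tcRep f).toFun s, ⟨g.tcRep f, fun _ _ => rfl⟩, fun i => g.toFun_tcRep hf hir (hg i)⟩

/-- **Lemma (interpolation by totally concave functions).**
If `f ∈ F^d_TCP` satisfies the interaction restriction condition of order `s`, then there
exists `g ∈ F^{d,s}_TC` agreeing with `f` at all the design points. -/
theorem exists_tc_interpolant (d s n : ℕ) (hs1 : 1 ≤ s) (hsd : s ≤ d)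
    (x : Fin n → Fin d → ℝ) (hx : ∀ i, x i ∈ unitCube (Fin d))
    (f : (Fin d → ℝ) → ℝ) (hf : MemTCP d f) (hir : InteractionRestriction d s f) :
    ∃ g : (Fin d → ℝ) → ℝ, MemTC d s g ∧ ∀ i, g (x i) = f (x i) :=
  exists_tc_interpolant_general d s n x hx f hf hir

end
end

section
/- Let x^(1),…,x^(n) ∈ [0,1]^d, 1 ≤ s ≤ d, and for each nonempty S ⊆ [d] with |S| ≤ s let L_S := Π_{j∈S}({0} ∪ {x_j^(i) : i = 1,…,n}) ∖ {0}. Given real numbers β_0 and β_S (1 ≤ |S| ≤ s) and finite Borel measures ν_S on [0,1)^{|S|}∖{0} (1 ≤ |S| ≤ s), let f_{β,ν} ∈ F^{d,s}_TC be the corresponding function. Then there exist real numbers γ_0 and γ_S (1 ≤ |S| ≤ s) and discrete measures μ_S supported on L_S (1 ≤ |S| ≤ s) such that the corresponding function f_{γ,μ} ∈ F^{d,s}_TC satisfies f_{γ,μ}(x^(i)) = f_{β,ν}(x^(i)) for all i = 1,…,n. -/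
open MeasureTheory ProbabilityTheory

noncomputable section

/-!
On a finite grid containing `0`, the hinge `v ↦ (v - u)_+` with `u ≥ 0` coincides with the convex
combination of the hinges whose knots are the two grid values neighbouring `u`. Taking products
over `j ∈ S`, the vector `Φ(t) = (∏_{j∈S} (x_j^{(i)} - t_j)_+)_i` is, for every `t ≥ 0`, a convex
combination of the vectors `Φ(p)` with `p` in the lattice generated by the design points, so
`∫ Φ dν_S` is a nonnegative combination of these finitely many vectors: this is the discrete
measure. Lattice points outside `[0,1)^{|S|} ∖ {0}` are either `0`, where `Φ` is the multilinear
term `∏_{j∈S} x_j^{(i)}` that is absorbed into `β_S`, or have a coordinate `1`, where `Φ`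
vanishes.
-/

open MeasureTheory Finset
open scoped ENNReal NNReal

lemma exists_hinge_eq_convexComb {G : Finset ℝ} {u : ℝ} (h : ∃ a ∈ G, a ≤ u) :
    ∃ a ∈ G, ∃ b ∈ G, ∃ θ : ℝ, 0 ≤ θ ∧ θ ≤ 1 ∧ ∀ v ∈ G,
      (1 - θ) * max (v - a) 0 + θ * max (v - b) 0 = max (v - u) 0 := by
  obtain ⟨a, ha, ha_max⟩ :=
    (G.filter (· ≤ u)).exists_max_image id (by simpa [Finset.Nonempty] using h)
  rw [mem_filter] at ha
  by_cases hb : ∃ b ∈ G, u < b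
  · obtain ⟨b, hb, hb_min⟩ :=
      (G.filter (u < ·)).exists_min_image id (by simpa [Finset.Nonempty] using hb)
    rw [mem_filter] at hb
    have hab : 0 < b - a := by linarith [ha.2, hb.2]
    refine ⟨a, ha.1, b, hb.1, (u - a) / (b - a), div_nonneg (by linarith) hab.le,
      (div_le_one hab).2 (by linarith), fun v hv => ?_⟩
    rcases le_or_gt v u with hvu | huv
    · have hva : v ≤ a := ha_max v (mem_filter.2 ⟨hv, hvu⟩)
      rw [max_eq_right (by linarith), max_eq_right (by linarith), max_eq_right (by linarith)]
      ring
    · have hbv : b ≤ v := hb_min v (mem_filter.2 ⟨hv, huv⟩)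
      rw [max_eq_left (by linarith), max_eq_left (by linarith), max_eq_left (by linarith)]
      field_simp
      ring
  · simp only [not_exists, not_and, not_lt] at hb
    refine ⟨a, ha.1, a, ha.1, 0, le_rfl, zero_le_one, fun v hv => ?_⟩
    have hva : v ≤ a := ha_max v (mem_filter.2 ⟨hv, hb v hv⟩)
    rw [max_eq_right (by linarith), max_eq_right (by linarith [ha.2])]
    ring

lemma exists_weights_hinge {G : Finset ℝ} {u : ℝ} (h : ∃ a ∈ G, a ≤ u) :
    ∃ ρ : ℝ → ℝ, (∀ g, 0 ≤ ρ g) ∧ ∑ g ∈ G, ρ g = 1 ∧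
      ∀ v ∈ G, ∑ g ∈ G, ρ g * max (v - g) 0 = max (v - u) 0 := by
  classical
  obtain ⟨a, ha, b, hb, θ, hθ0, hθ1, hab⟩ := exists_hinge_eq_convexComb h
  set ρ : ℝ → ℝ := fun g => (1 - θ) * (if g = a then 1 else 0) + θ * (if g = b then 1 else 0)
  have hsum : ∀ F : ℝ → ℝ, ∑ g ∈ G, ρ g * F g = (1 - θ) * F a + θ * F b := by
    intro F
    simp only [ρ, add_mul, mul_assoc, ite_mul, one_mul, zero_mul, sum_add_distrib, ← mul_sum,
      sum_ite_eq', ha, hb, if_true]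
  refine ⟨ρ, fun g => ?_, by simpa using hsum 1, fun v hv => (hsum _).trans (hab v hv)⟩
  have := sub_nonneg.2 hθ1
  positivity

def knotLattice {ι : Type*} [Fintype ι] [DecidableEq ι] (S : Finset ι) (G : ι → Finset ℝ) :
    Finset (ι → ℝ) :=
  Fintype.piFinset fun j => if j ∈ S then G j else {0}

lemma exists_weights_prod_hinge {ι : Type*} [Fintype ι] [DecidableEq ι] (S : Finset ι)
    (G : ι → Finset ℝ) {t : ι → ℝ} (ht : ∀ j ∈ S, ∃ a ∈ G j, a ≤ t j) :
    ∃ q : (ι → ℝ) → ℝ, (∀ p, 0 ≤ q p) ∧ ∑ p ∈ knotLattice S G, q p = 1 ∧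
      ∀ z : ι → ℝ, (∀ j ∈ S, z j ∈ G j) →
        ∑ p ∈ knotLattice S G, q p * ∏ j ∈ S, max (z j - p j) 0 =
          ∏ j ∈ S, max (z j - t j) 0 := by
  have hρ : ∀ j, ∃ ρ : ℝ → ℝ, (∀ g, 0 ≤ ρ g) ∧
      ∑ g ∈ (if j ∈ S then G j else {0}), ρ g = 1 ∧
      (j ∈ S → ∀ v ∈ G j, ∑ g ∈ G j, ρ g * max (v - g) 0 = max (v - t j) 0) := by
    intro j
    by_cases hj : j ∈ S
    · obtain ⟨ρ, hρ0, hρ1, hρ⟩ := exists_weights_hinge (ht j hj)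
      exact ⟨ρ, hρ0, by simpa [hj] using hρ1, fun _ => hρ⟩
    · exact ⟨fun _ => 1, fun _ => zero_le_one, by simp [hj], fun h => absurd h hj⟩
  choose ρ hρ0 hρ1 hρ using hρ
  have hprod : ∀ f : ι → ℝ, ∏ j ∈ S, f j = ∏ j, if j ∈ S then f j else 1 := fun f => by
    rw [prod_ite_mem, univ_inter]
  refine ⟨fun p => ∏ j, ρ j (p j), fun p => prod_nonneg fun j _ => hρ0 j (p j), ?_,
    fun z hz => ?_⟩
  · rw [knotLattice, ← prod_univ_sum]
    exact prod_eq_one fun j _ => hρ1 j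
  · simp_rw [hprod, ← prod_mul_distrib]
    rw [knotLattice, ← prod_univ_sum _ fun j g => ρ j g * if j ∈ S then max (z j - g) 0 else 1]
    refine prod_congr rfl fun j _ => ?_
    by_cases hj : j ∈ S
    · simpa [hj] using hρ j hj (z j) (hz j hj)
    · simpa [hj] using hρ1 j

lemma exists_sum_smul_eq_of_mem_convexHull_image {α E : Type*} [AddCommGroup E] [Module ℝ E]
    {f : α → E} {P : Finset α} {y : E} (hy : y ∈ convexHull ℝ (f '' P)) :
    ∃ w : α → ℝ, (∀ p, 0 ≤ w p) ∧ ∑ p ∈ P, w p = 1 ∧ ∑ p ∈ P, w p • f p = y := by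
  classical
  refine convexHull_min (t := {y | ∃ w : α → ℝ, (∀ p, 0 ≤ w p) ∧ ∑ p ∈ P, w p = 1 ∧
    ∑ p ∈ P, w p • f p = y}) ?_ ?_ hy
  · rintro _ ⟨p, hp, rfl⟩
    rw [mem_coe] at hp
    exact ⟨fun q => if q = p then 1 else 0, fun q => by positivity, by simp [hp], by simp [hp]⟩
  · rintro _ ⟨w, hw0, hw1, rfl⟩ _ ⟨w', hw0', hw1', rfl⟩ a b ha hb hab
    refine ⟨fun p => a * w p + b * w' p, fun p => by have := hw0 p; have := hw0' p; positivity,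
      ?_, ?_⟩
    · simp [sum_add_distrib, ← mul_sum, hw1, hw1', hab]
    · simp [add_smul, mul_smul, sum_add_distrib, smul_sum]

lemma exists_integral_eq_sum_smul {α E : Type*} [MeasurableSpace α] [NormedAddCommGroup E]
    [NormedSpace ℝ E] [CompleteSpace E] {μ : Measure α} [IsFiniteMeasure μ] {f : α → E}
    (hf : Integrable f μ) {P : Finset α} (hP : ∀ᵐ t ∂μ, f t ∈ convexHull ℝ (f '' P)) :
    ∃ w : α → ℝ, (∀ p, 0 ≤ w p) ∧ ∫ t, f t ∂μ = ∑ p ∈ P, w p • f p := by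
  rcases eq_zero_or_neZero μ with rfl | hμ
  · exact ⟨0, fun _ => le_rfl, by simp⟩
  obtain ⟨w, hw0, -, hw⟩ := exists_sum_smul_eq_of_mem_convexHull_image
    ((convex_convexHull ℝ _).average_mem ((P.finite_toSet.image f).isClosed_convexHull ℝ) hP hf)
  refine ⟨fun p => μ.real Set.univ * w p, fun p => mul_nonneg measureReal_nonneg (hw0 p), ?_⟩
  rw [← measure_smul_average, ← hw, smul_sum]
  simp [mul_smul]

lemma mem_knotLattice {ι : Type*} [Fintype ι] [DecidableEq ι] {S : Finset ι}
    {G : ι → Finset ℝ} {p : ι → ℝ} :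
    p ∈ knotLattice S G ↔ (∀ j ∈ S, p j ∈ G j) ∧ ∀ j ∉ S, p j = 0 := by
  simp only [knotLattice, Fintype.mem_piFinset]
  refine ⟨fun h => ⟨fun j hj => by simpa [hj] using h j, fun j hj => by simpa [hj] using h j⟩,
    fun h j => ?_⟩
  by_cases hj : j ∈ S <;> simp [hj, h.1, h.2]

def designGrid {d n : ℕ} (x : Fin n → Fin d → ℝ) (j : Fin d) : Finset ℝ :=
  insert 0 (univ.image fun i => x i j)

section DesignLattice

variable {d n : ℕ} {x : Fin n → Fin d → ℝ} {S : Finset (Fin d)} {p : Fin d → ℝ}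

lemma inLattice_of_mem_knotLattice (hp : p ∈ knotLattice S (designGrid x))
    (hpS : p ∈ tcSupport d S) : InLattice x S p := by
  rw [mem_knotLattice] at hp
  refine ⟨fun j hj => ?_, hpS.2, hp.2⟩
  simpa [designGrid, eq_comm] using hp.1 j hj

lemma prod_hinge_eq_zero_of_mem_knotLattice (hx : ∀ i, x i ∈ unitCube (Fin d))
    (hp : p ∈ knotLattice S (designGrid x)) (hp0 : p ≠ 0) (hpS : p ∉ tcSupport d S) (i : Fin n) :
    ∏ j ∈ S, max (x i j - p j) 0 = 0 := by
  rw [mem_knotLattice] at hp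
  have hp_nonneg : ∀ j ∈ S, 0 ≤ p j := fun j hj => by
    rcases mem_insert.1 (hp.1 j hj) with h | h
    · exact h.ge
    · obtain ⟨k, -, hk⟩ := mem_image.1 h
      exact hk ▸ (hx k j (Set.mem_univ _)).1
  have hp_ne : ∃ j ∈ S, p j ≠ 0 := by
    by_contra! h
    exact hp0 (funext fun j => if hj : j ∈ S then h j hj else hp.2 j hj)
  obtain ⟨j, hj, hpj⟩ : ∃ j ∈ S, 1 ≤ p j := by
    by_contra! h
    exact hpS ⟨fun j hj => ⟨hp_nonneg j hj, h j hj⟩, hp_ne⟩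
  exact prod_eq_zero hj (max_eq_right (by linarith [(hx i j (Set.mem_univ _)).2]))

lemma exists_latticeSum_eq_integral_hinge (hx : ∀ i, x i ∈ unitCube (Fin d))
    (ν : Measure (Fin d → ℝ)) [IsFiniteMeasure ν] (hν : ν (tcSupport d S)ᶜ = 0) :
    ∃ (T : Finset (Fin d → ℝ)) (c : (Fin d → ℝ) → ℝ≥0) (δ : ℝ),
      (∀ t ∈ T, InLattice x S t ∧ t ∈ tcSupport d S) ∧
      ∀ i, ∫ t, (∏ j ∈ S, max (x i j - t j) 0) ∂ν =
        ∑ t ∈ T, c t * ∏ j ∈ S, max (x i j - t j) 0 + δ * ∏ j ∈ S, x i j := by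
  classical
  have hx01 : ∀ i j, x i j ∈ Set.Icc (0 : ℝ) 1 := fun i j => hx i j (Set.mem_univ _)
  set P := knotLattice S (designGrid x)
  set Φ : (Fin d → ℝ) → Fin n → ℝ := fun t i => ∏ j ∈ S, max (x i j - t j) 0
  have hsupp : ∀ᵐ t ∂ν, t ∈ tcSupport d S := ae_iff.2 hν
  have hΦ_int : Integrable Φ ν := by
    refine Integrable.of_bound (by fun_prop) 1 (hsupp.mono fun t ht => ?_)
    refine (pi_norm_le_iff_of_nonneg zero_le_one).2 fun i => ?_
    rw [Real.norm_of_nonneg (prod_nonneg fun j _ => le_max_right _ _)]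
    exact prod_le_one (fun j _ => le_max_right _ _) fun j hj =>
      max_le (by linarith [(hx01 i j).2, (ht.1 j hj).1]) zero_le_one
  have hΦ_hull : ∀ t ∈ tcSupport d S, Φ t ∈ convexHull ℝ (Φ '' P) := by
    intro t ht
    obtain ⟨q, hq0, hq1, hq⟩ := exists_weights_prod_hinge S (designGrid x) (t := t)
      fun j hj => ⟨0, mem_insert_self _ _, (ht.1 j hj).1⟩
    have hΦt : Φ t = ∑ p ∈ P, q p • Φ p := funext fun i => by
      simpa [Φ, Finset.sum_apply] using
        (hq (x i) fun j _ => mem_insert_of_mem (mem_image_of_mem _ (mem_univ i))).symm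
    rw [hΦt]
    exact (convex_convexHull ℝ _).sum_mem (fun p _ => hq0 p) hq1
      fun p hp => subset_convexHull ℝ _ (Set.mem_image_of_mem Φ hp)
  obtain ⟨w, hw0, hw⟩ := exists_integral_eq_sum_smul hΦ_int (hsupp.mono hΦ_hull)
  refine ⟨P.filter (· ∈ tcSupport d S), fun p => ⟨w p, hw0 p⟩, w 0,
    fun t ht => ⟨inLattice_of_mem_knotLattice (mem_filter.1 ht).1 (mem_filter.1 ht).2,
      (mem_filter.1 ht).2⟩, fun i => ?_⟩
  have h0 : (0 : Fin d → ℝ) ∈ P.filter (· ∉ tcSupport d S) :=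
    mem_filter.2 ⟨mem_knotLattice.2 ⟨fun j _ => mem_insert_self _ _, fun _ _ => rfl⟩,
      fun h => by simpa using h.2⟩
  have hΦ0 : Φ 0 i = ∏ j ∈ S, x i j :=
    prod_congr rfl fun j _ => by simpa using (hx01 i j).1
  calc ∫ t, Φ t i ∂ν = (∫ t, Φ t ∂ν) i := (eval_integral (fun i => hΦ_int.eval i) i).symm
    _ = ∑ p ∈ P, w p * Φ p i := by simp [hw, Finset.sum_apply]
    _ = ∑ p ∈ P.filter (· ∈ tcSupport d S), w p * Φ p i + w 0 * Φ 0 i := by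
      rw [← sum_filter_add_sum_filter_not P (· ∈ tcSupport d S)]
      congr 1
      refine sum_eq_single_of_mem 0 h0 fun p hp hp0 => ?_
      rw [mem_filter] at hp
      simp [Φ, prod_hinge_eq_zero_of_mem_knotLattice hx hp.1 hp0 hp.2]
    _ = _ := by rw [hΦ0]; rfl

end DesignLattice

def TCRep.ofDiscrete {d : ℕ} (β0 : ℝ) (β : Finset (Fin d) → ℝ)
    (T : Finset (Fin d) → Finset (Fin d → ℝ)) (c : Finset (Fin d) → (Fin d → ℝ) → ℝ≥0)
    (hT : ∀ S, ∀ t ∈ T S, t ∈ tcSupport d S) : TCRep d where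
  β0 := β0
  β := β
  ν S := ∑ t ∈ T S, (c S t : ℝ≥0∞) • Measure.dirac t
  finite S := ⟨by simp [Measure.finsetSum_apply, ENNReal.sum_lt_top]⟩
  support S := by
    rw [Measure.finsetSum_apply]
    exact sum_eq_zero fun t ht => by simp [Measure.dirac_apply, hT S t ht]

lemma TCRep.ofDiscrete_toFun {d : ℕ} (β0 : ℝ) (β : Finset (Fin d) → ℝ)
    (T : Finset (Fin d) → Finset (Fin d → ℝ)) (c : Finset (Fin d) → (Fin d → ℝ) → ℝ≥0)
    (hT : ∀ S, ∀ t ∈ T S, t ∈ tcSupport d S) (s : ℕ) (z : Fin d → ℝ) :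
    (TCRep.ofDiscrete β0 β T c hT).toFun s z =
      β0 + ∑ S ∈ smallSets d s, β S * ∏ j ∈ S, z j
        - ∑ S ∈ smallSets d s, ∑ t ∈ T S, c S t * ∏ j ∈ S, max (z j - t j) 0 := by
  simp only [TCRep.toFun, TCRep.ofDiscrete]
  congr 1
  refine sum_congr rfl fun S _ => ?_
  rw [integral_finsetSum_measure fun t _ => (integrable_dirac (by simp)).smul_measure (by simp)]
  simp [integral_dirac, NNReal.smul_def]

theorem reduction_to_discrete_measures_general (d s n : ℕ)
    (x : Fin n → Fin d → ℝ) (hx : ∀ i, x i ∈ unitCube (Fin d))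
    (r : TCRep d) :
    ∃ r' : TCRep d,
      (∀ S ∈ smallSets d s, ∃ (T : Finset (Fin d → ℝ)) (c : (Fin d → ℝ) → ENNReal),
        (∀ t ∈ T, InLattice x S t) ∧
        r'.ν S = ∑ t ∈ T, c t • MeasureTheory.Measure.dirac t) ∧
      ∀ i, r'.toFun s (x i) = r.toFun s (x i) := by
  have := r.finite
  choose T c δ hT hint using fun S =>
    exists_latticeSum_eq_integral_hinge hx (S := S) (r.ν S) (r.support S)
  refine ⟨.ofDiscrete r.β0 (fun S => r.β S - δ S) T c fun S t ht => (hT S t ht).2,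
    fun S _ => ⟨T S, fun t => c S t, fun t ht => (hT S t ht).1, rfl⟩, fun i => ?_⟩
  rw [TCRep.ofDiscrete_toFun, TCRep.toFun]
  simp only [hint, sub_mul, sum_sub_distrib, sum_add_distrib]
  ring

/-- **Lemma (reduction to discrete measures).**
For any representation `(β₀,(β_S),(ν_S))` of a function in `F^{d,s}_TC` there is another
representation `(γ₀,(γ_S),(μ_S))` whose measures are discrete and supported on the
lattices `L_S` generated by the design points, and whose associated function agrees with
the original one at all design points. -/
theorem reduction_to_discrete_measures (d s n : ℕ) (hs1 : 1 ≤ s) (hsd : s ≤ d)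
    (x : Fin n → Fin d → ℝ) (hx : ∀ i, x i ∈ unitCube (Fin d))
    (r : TCRep d) :
    ∃ r' : TCRep d,
      (∀ S ∈ smallSets d s, ∃ (T : Finset (Fin d → ℝ)) (c : (Fin d → ℝ) → ENNReal),
        (∀ t ∈ T, InLattice x S t) ∧
        r'.ν S = ∑ t ∈ T, c t • MeasureTheory.Measure.dirac t) ∧
      ∀ i, r'.toFun s (x i) = r.toFun s (x i) :=
  reduction_to_discrete_measures_general d s n x hx r

end
end

section
/- Let f : [0,1]^d → ℝ. Suppose that for each p = (p_1,…,p_d) ∈ {0,1,2}^d with max_k p_k = 2, the divided difference of f of order p is ≤ 0 whenever the points satisfy 0 ≤ x_1^{(k)} < ⋯ < x_{p_k+1}^{(k)} ≤ 1 for every k with p_k ≠ 0 and x_1^{(k)} = 0 for every k with p_k = 0. Then f ∈ F^d_TCP, i.e., the divided difference of f of order p is ≤ 0 for every p ∈ {0,1,2}^d with max_k p_k = 2 and all admissible points in [0,1]^d. -/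
open MeasureTheory ProbabilityTheory

noncomputable section

section AuxTCP

open Finset

/-- divided difference over finite point sets. -/
def gdd {d : ℕ} (f : (Fin d → ℝ) → ℝ) (s : Fin d → Finset ℝ) : ℝ :=
  ∑ y ∈ Fintype.piFinset s, f y / ∏ k, ∏ z ∈ (s k).erase (y k), (y k - z)

lemma mvDivDiff_eq_gdd {d : ℕ} (f : (Fin d → ℝ) → ℝ) (p : Fin d → ℕ)
    (x : (k : Fin d) → Fin (p k + 1) → ℝ) (hx : ∀ k, Function.Injective (x k)) :
    mvDivDiff f p x = gdd f (fun k => Finset.univ.image (x k)) := by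
  unfold mvDivDiff gdd
  refine Finset.sum_bij (fun i _ => fun k => x k (i k)) ?_ ?_ ?_ ?_
  · intro i _
    exact Fintype.mem_piFinset.mpr fun k => Finset.mem_image_of_mem _ (mem_univ _)
  · intro i _ i' _ hii
    funext k
    exact hx k (congrFun hii k)
  · intro y hy
    have hy' : ∀ k, ∃ j, x k j = y k := by
      intro k
      have := Fintype.mem_piFinset.mp hy k
      simpa using this
    exact ⟨fun k => (hy' k).choose, mem_univ _, funext fun k => (hy' k).choose_spec⟩
  · intro i _
    congr 1
    refine Finset.prod_congr rfl fun k _ => ?_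
    rw [← Finset.image_erase (hx k), Finset.prod_image (fun a _ b _ hab => hx k hab)]

lemma gdd_split {d : ℕ} (f : (Fin d → ℝ) → ℝ) (s : Fin d → Finset ℝ) (k : Fin d) (a : ℝ)
    (ha : a ≠ 0) (hsk : s k = {a}) :
    gdd f s = gdd f (Function.update s k {0})
      + a * gdd f (Function.update s k ({0, a} : Finset ℝ)) := by
  set s0 := Function.update s k ({0} : Finset ℝ) with hs0
  set s1 := Function.update s k ({0, a} : Finset ℝ) with hs1
  have h0a : ({0, a} : Finset ℝ).erase 0 = {a} := by
    rw [Finset.erase_insert]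
    simp [Ne.symm ha]
  have ha0 : ({0, a} : Finset ℝ).erase a = {0} := by
    rw [Finset.pair_comm, Finset.erase_insert]
    simp [ha]
  have hunion : Fintype.piFinset s1 = Fintype.piFinset s0 ∪ Fintype.piFinset s := by
    ext y
    simp only [Fintype.mem_piFinset, Finset.mem_union]
    constructor
    · intro hy
      have hk := hy k
      rw [hs1, Function.update_self] at hk
      rcases Finset.mem_insert.mp hk with h0 | hA
      · left
        intro j
        by_cases hj : j = k
        · subst hj; rw [hs0, Function.update_self]; simpa using h0
        · rw [hs0, Function.update_of_ne hj]
          have := hy j; rwa [hs1, Function.update_of_ne hj] at this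
      · right
        intro j
        by_cases hj : j = k
        · subst hj; rw [hsk]; simpa using hA
        · have := hy j; rwa [hs1, Function.update_of_ne hj] at this
    · rintro (hy | hy) <;> intro j <;> by_cases hj : j = k
      · subst hj; rw [hs1, Function.update_self]
        have := hy j; rw [hs0, Function.update_self] at this
        simp only [Finset.mem_singleton] at this
        simp [this]
      · rw [hs1, Function.update_of_ne hj]
        have := hy j; rwa [hs0, Function.update_of_ne hj] at this
      · subst hj; rw [hs1, Function.update_self]
        have := hy j; rw [hsk] at this
        simp only [Finset.mem_singleton] at this
        simp [this]
      · rw [hs1, Function.update_of_ne hj]; exact hy j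
  have hdisj : Disjoint (Fintype.piFinset s0) (Fintype.piFinset s) := by
    rw [Finset.disjoint_left]
    intro y hy0 hyA
    have h1 := Fintype.mem_piFinset.mp hy0 k
    have h2 := Fintype.mem_piFinset.mp hyA k
    rw [hs0, Function.update_self] at h1
    rw [hsk] at h2
    simp only [Finset.mem_singleton] at h1 h2
    exact ha (h2 ▸ h1 ▸ rfl : a = 0)
  have key : gdd f s1 = -(a⁻¹) * gdd f s0 + a⁻¹ * gdd f s := by
    unfold gdd
    rw [hunion, Finset.sum_union hdisj]
    congr 1
    · rw [Finset.mul_sum]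
      refine Finset.sum_congr rfl fun y hy => ?_
      have hyk : y k = 0 := by
        have := Fintype.mem_piFinset.mp hy k
        rw [hs0, Function.update_self] at this
        simpa using this
      have hD1 : ∏ j, ∏ z ∈ (s1 j).erase (y j), (y j - z)
          = (-a) * ∏ j, ∏ z ∈ (s0 j).erase (y j), (y j - z) := by
        rw [← Finset.mul_prod_erase Finset.univ _ (Finset.mem_univ k),
            ← Finset.mul_prod_erase Finset.univ
              (fun j => ∏ z ∈ (s0 j).erase (y j), (y j - z)) (Finset.mem_univ k)]
        have h1 : ∏ z ∈ (s1 k).erase (y k), (y k - z) = -a := by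
          rw [hs1, Function.update_self, hyk, h0a, Finset.prod_singleton]
          ring
        have h2 : ∏ z ∈ (s0 k).erase (y k), (y k - z) = 1 := by
          rw [hs0, Function.update_self, hyk, Finset.erase_singleton, Finset.prod_empty]
        rw [h1, h2, one_mul]
        congr 1
        refine Finset.prod_congr rfl fun j hj => ?_
        have hj' : j ≠ k := (Finset.mem_erase.mp hj).1
        rw [hs1, hs0, Function.update_of_ne hj', Function.update_of_ne hj']
      rw [hD1, div_eq_mul_inv, div_eq_mul_inv, mul_inv]
      ring
    · rw [Finset.mul_sum]
      refine Finset.sum_congr rfl fun y hy => ?_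
      have hyk : y k = a := by
        have := Fintype.mem_piFinset.mp hy k
        rw [hsk] at this
        simpa using this
      have hD1 : ∏ j, ∏ z ∈ (s1 j).erase (y j), (y j - z)
          = a * ∏ j, ∏ z ∈ (s j).erase (y j), (y j - z) := by
        rw [← Finset.mul_prod_erase Finset.univ _ (Finset.mem_univ k),
            ← Finset.mul_prod_erase Finset.univ
              (fun j => ∏ z ∈ (s j).erase (y j), (y j - z)) (Finset.mem_univ k)]
        have h1 : ∏ z ∈ (s1 k).erase (y k), (y k - z) = a := by
          rw [hs1, Function.update_self, hyk, ha0, Finset.prod_singleton]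
          ring
        have h2 : ∏ z ∈ (s k).erase (y k), (y k - z) = 1 := by
          rw [hsk, hyk, Finset.erase_singleton, Finset.prod_empty]
        rw [h1, h2, one_mul]
        congr 1
        refine Finset.prod_congr rfl fun j hj => ?_
        have hj' : j ≠ k := (Finset.mem_erase.mp hj).1
        rw [hs1, Function.update_of_ne hj']
      rw [hD1, div_eq_mul_inv, div_eq_mul_inv, mul_inv]
      ring
  rw [key]
  field_simp
  ring

lemma aux_ind (d : ℕ) (f : (Fin d → ℝ) → ℝ)
    (h : ∀ p : Fin d → ℕ, (∀ k, p k ≤ 2) → (∃ k, p k = 2) →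
      ∀ x : (k : Fin d) → Fin (p k + 1) → ℝ,
        (∀ k, StrictMono (x k)) → (∀ k j, x k j ∈ Set.Icc (0 : ℝ) 1) →
        (∀ k, p k = 0 → x k 0 = 0) →
        mvDivDiff f p x ≤ 0) :
    ∀ n : ℕ, ∀ p : Fin d → ℕ, (∀ k, p k ≤ 2) → (∃ k, p k = 2) →
      ∀ x : (k : Fin d) → Fin (p k + 1) → ℝ,
        (∀ k, StrictMono (x k)) → (∀ k j, x k j ∈ Set.Icc (0:ℝ) 1) →
        (Finset.univ.filter fun k => p k = 0 ∧ x k 0 ≠ 0).card ≤ n →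
        mvDivDiff f p x ≤ 0 := by
  intro n
  induction n with
  | zero =>
    intro p hp2 hpex x hsm hIcc hcard
    refine h p hp2 hpex x hsm hIcc ?_
    intro k hk
    by_contra hne
    have hmem : k ∈ Finset.univ.filter fun k => p k = 0 ∧ x k 0 ≠ 0 := by
      simp [hk, hne]
    have := Finset.card_pos.mpr ⟨k, hmem⟩
    omega
  | succ n ih =>
    intro p hp2 hpex x hsm hIcc hcard
    by_cases hc : (Finset.univ.filter fun k => p k = 0 ∧ x k 0 ≠ 0).card ≤ n
    · exact ih p hp2 hpex x hsm hIcc hc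
    have hne : (Finset.univ.filter fun k => p k = 0 ∧ x k 0 ≠ 0).Nonempty := by
      rw [← Finset.card_pos]; omega
    obtain ⟨k, hkF⟩ := hne
    have hk := Finset.mem_filter.mp hkF
    obtain ⟨-, hpk, hxk⟩ := hk
    set a := x k 0 with haeq
    have ha01 := hIcc k 0
    have ha : 0 < a := lt_of_le_of_ne ha01.1 (Ne.symm hxk)
    -- the pinned version of x
    set x0 : (j : Fin d) → Fin (p j + 1) → ℝ :=
      Function.update x k (fun _ => 0) with hx0
    have hx0k : x0 k = fun _ => (0:ℝ) := Function.update_self k _ x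
    have hx0j : ∀ j, j ≠ k → x0 j = x j := fun j hj => Function.update_of_ne hj _ x
    have hsm0 : ∀ j, StrictMono (x0 j) := by
      intro j
      by_cases hj : j = k
      · rw [hj, hx0k]
        intro i i' hii
        exfalso
        have h1 : (i : ℕ) < (i' : ℕ) := hii
        have h2 := i'.isLt
        omega
      · rw [hx0j j hj]; exact hsm j
    have hIcc0 : ∀ j i, x0 j i ∈ Set.Icc (0:ℝ) 1 := by
      intro j i
      by_cases hj : j = k
      · subst hj; rw [hx0k]; exact ⟨le_refl 0, zero_le_one⟩
      · rw [hx0j j hj]; exact hIcc j i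
    have hinj0 : ∀ j, Function.Injective (x0 j) := by
      intro j
      by_cases hj : j = k
      · have hpj : p j = 0 := by rw [hj]; exact hpk
        intro i i' _
        have h1 := i.isLt
        have h2 := i'.isLt
        exact Fin.ext (by omega)
      · rw [hx0j j hj]; exact (hsm j).injective
    have hcard0 : (Finset.univ.filter fun j => p j = 0 ∧ x0 j 0 ≠ 0).card ≤ n := by
      have hsub : (Finset.univ.filter fun j => p j = 0 ∧ x0 j 0 ≠ 0) ⊆
          (Finset.univ.filter fun j => p j = 0 ∧ x j 0 ≠ 0).erase k := by
        intro j hj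
        rw [Finset.mem_filter] at hj
        obtain ⟨-, hpj, hxj⟩ := hj
        have hjk : j ≠ k := by
          intro e
          apply hxj
          rw [e, hx0k]
        rw [Finset.mem_erase, Finset.mem_filter]
        rw [hx0j j hjk] at hxj
        exact ⟨hjk, Finset.mem_univ j, hpj, hxj⟩
      calc (Finset.univ.filter fun j => p j = 0 ∧ x0 j 0 ≠ 0).card
          ≤ ((Finset.univ.filter fun j => p j = 0 ∧ x j 0 ≠ 0).erase k).card :=
            Finset.card_le_card hsub
        _ = (Finset.univ.filter fun j => p j = 0 ∧ x j 0 ≠ 0).card - 1 :=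
            Finset.card_erase_of_mem hkF
        _ ≤ n := by omega
    have term1 : mvDivDiff f p x0 ≤ 0 := ih p hp2 hpex x0 hsm0 hIcc0 hcard0
    -- the order-raised version
    set p' : Fin d → ℕ := fun j => if j = k then 1 else p j with hp'
    have hp'k : p' k = 1 := if_pos rfl
    have hp'j : ∀ j, j ≠ k → p' j = p j := fun j hj => if_neg hj
    set x2 : (j : Fin d) → Fin (p' j + 1) → ℝ :=
      fun j => if hj : j = k then (fun i => if (i : ℕ) = 0 then 0 else a)
        else (fun i => x j (Fin.cast (by rw [hp'j j hj]) i)) with hx2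
    have hx2k : x2 k = fun i : Fin (p' k + 1) => if (i : ℕ) = 0 then (0:ℝ) else a :=
      dif_pos rfl
    have hx2j : ∀ j (hj : j ≠ k),
        x2 j = fun i => x j (Fin.cast (by rw [hp'j j hj]) i) := fun j hj => dif_neg hj
    have hp'2 : ∀ j, p' j ≤ 2 := by
      intro j
      by_cases hj : j = k
      · rw [hj, hp'k]; omega
      · rw [hp'j j hj]; exact hp2 j
    have hp'ex : ∃ j, p' j = 2 := by
      obtain ⟨k0, hk0⟩ := hpex
      have hk0k : k0 ≠ k := by
        intro e; rw [e, hpk] at hk0; omega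
      exact ⟨k0, by rw [hp'j k0 hk0k]; exact hk0⟩
    have hsm2 : ∀ j, StrictMono (x2 j) := by
      intro j
      by_cases hj : j = k
      · subst hj
        rw [hx2k]
        intro i i' hii
        have h1 : (i : ℕ) < (i' : ℕ) := hii
        have h2 := i'.isLt
        have hi0 : (i : ℕ) = 0 := by omega
        have hi1 : ¬((i' : ℕ) = 0) := by omega
        show (if (i : ℕ) = 0 then (0:ℝ) else a) < (if (i' : ℕ) = 0 then (0:ℝ) else a)
        rw [if_pos hi0, if_neg hi1]
        exact ha
      · rw [hx2j j hj]
        intro i i' hii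
        exact hsm j hii
    have hIcc2 : ∀ j i, x2 j i ∈ Set.Icc (0:ℝ) 1 := by
      intro j i
      by_cases hj : j = k
      · subst hj
        rw [hx2k]
        show (if (i : ℕ) = 0 then (0:ℝ) else a) ∈ Set.Icc (0:ℝ) 1
        by_cases hi : (i : ℕ) = 0
        · rw [if_pos hi]; exact ⟨le_refl 0, zero_le_one⟩
        · rw [if_neg hi]; exact ha01
      · rw [hx2j j hj]
        exact hIcc j _
    have hcard2 : (Finset.univ.filter fun j => p' j = 0 ∧ x2 j 0 ≠ 0).card ≤ n := by
      have hsub : (Finset.univ.filter fun j => p' j = 0 ∧ x2 j 0 ≠ 0) ⊆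
          (Finset.univ.filter fun j => p j = 0 ∧ x j 0 ≠ 0).erase k := by
        intro j hj
        rw [Finset.mem_filter] at hj
        obtain ⟨-, hpj, hxj⟩ := hj
        have hjk : j ≠ k := by
          intro e; rw [e, hp'k] at hpj; omega
        rw [hp'j j hjk] at hpj
        rw [hx2j j hjk] at hxj
        have hcast : x j (Fin.cast (by rw [hp'j j hjk]) (0 : Fin (p' j + 1))) = x j 0 := rfl
        rw [Finset.mem_erase, Finset.mem_filter]
        refine ⟨hjk, Finset.mem_univ j, hpj, ?_⟩
        rw [← hcast]
        exact hxj
      calc (Finset.univ.filter fun j => p' j = 0 ∧ x2 j 0 ≠ 0).card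
          ≤ ((Finset.univ.filter fun j => p j = 0 ∧ x j 0 ≠ 0).erase k).card :=
            Finset.card_le_card hsub
        _ = (Finset.univ.filter fun j => p j = 0 ∧ x j 0 ≠ 0).card - 1 :=
            Finset.card_erase_of_mem hkF
        _ ≤ n := by omega
    have term2 : mvDivDiff f p' x2 ≤ 0 := ih p' hp'2 hp'ex x2 hsm2 hIcc2 hcard2
    -- image identities
    set s : Fin d → Finset ℝ := fun j => Finset.univ.image (x j) with hs
    have hsk : s k = {a} := by
      rw [hs]
      refine Finset.eq_singleton_iff_unique_mem.mpr
        ⟨Finset.mem_image_of_mem _ (Finset.mem_univ 0), ?_⟩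
      intro z hz
      obtain ⟨i, -, rfl⟩ := Finset.mem_image.mp hz
      have hi : i = 0 := by
        have h2 := i.isLt
        apply Fin.ext
        simp only [Fin.val_zero]
        omega
      rw [hi]
    have him0 : (fun j => Finset.univ.image (x0 j)) = Function.update s k {0} := by
      funext j
      by_cases hj : j = k
      · rw [hj, Function.update_self, hx0k]
        exact Finset.image_const ⟨0, Finset.mem_univ 0⟩ 0
      · rw [Function.update_of_ne hj, hx0j j hj]
    have him2 : (fun j => Finset.univ.image (x2 j))
        = Function.update s k ({0, a} : Finset ℝ) := by
      funext j
      by_cases hj : j = k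
      · rw [hj, Function.update_self, hx2k]
        ext z
        simp only [Finset.mem_image, Finset.mem_univ, true_and, Finset.mem_insert,
          Finset.mem_singleton]
        constructor
        · rintro ⟨i, rfl⟩
          by_cases hi : (i : ℕ) = 0
          · left; rw [if_pos hi]
          · right; rw [if_neg hi]
        · rintro (rfl | rfl)
          · exact ⟨⟨0, Nat.succ_pos _⟩, by simp⟩
          · refine ⟨⟨1, by rw [hp'k]; omega⟩, ?_⟩
            simp
      · rw [Function.update_of_ne hj, hx2j j hj]
        apply Finset.ext
        intro z
        constructor
        · intro hz
          obtain ⟨i, -, rfl⟩ := Finset.mem_image.mp hz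
          exact Finset.mem_image_of_mem _ (Finset.mem_univ _)
        · intro hz
          obtain ⟨i, -, rfl⟩ := Finset.mem_image.mp hz
          refine Finset.mem_image.mpr ⟨Fin.cast (by rw [hp'j j hj]) i, Finset.mem_univ _, rfl⟩
    -- assemble
    have hbridge : mvDivDiff f p x = gdd f s :=
      mvDivDiff_eq_gdd f p x (fun j => (hsm j).injective)
    have hbridge0 : mvDivDiff f p x0 = gdd f (Function.update s k {0}) := by
      rw [mvDivDiff_eq_gdd f p x0 hinj0, him0]
    have hbridge2 : mvDivDiff f p' x2 = gdd f (Function.update s k ({0, a} : Finset ℝ)) := by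
      rw [mvDivDiff_eq_gdd f p' x2 (fun j => (hsm2 j).injective), him2]
    rw [hbridge, gdd_split f s k a (ne_of_gt ha) hsk, ← hbridge0, ← hbridge2]
    have : a * mvDivDiff f p' x2 ≤ 0 := mul_nonpos_of_nonneg_of_nonpos (le_of_lt ha) term2
    linarith

end AuxTCP

/-- **Lemma (weaker sufficient condition for Popoviciu total concavity).**
If for every `p ∈ {0,1,2}^d` with `max_k p_k = 2` the divided differences of `f` of order
`p` are nonpositive whenever the coordinates with `p_k = 0` are pinned at `0`, then
`f ∈ F^d_TCP`. -/
theorem tcp_from_pinned_divided_differences (d : ℕ) (f : (Fin d → ℝ) → ℝ)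
    (h : ∀ p : Fin d → ℕ, (∀ k, p k ≤ 2) → (∃ k, p k = 2) →
      ∀ x : (k : Fin d) → Fin (p k + 1) → ℝ,
        (∀ k, StrictMono (x k)) → (∀ k j, x k j ∈ Set.Icc (0 : ℝ) 1) →
        (∀ k, p k = 0 → x k 0 = 0) →
        mvDivDiff f p x ≤ 0) :
    MemTCP d f := by
  intro p hp2 hpex x hsm hIcc
  exact aux_ind d f h (Finset.univ.filter fun k => p k = 0 ∧ x k 0 ≠ 0).card
    p hp2 hpex x hsm hIcc le_rfl

end
end
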